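/- arXiv:math/0102010 — 6 statements merged into one kernel-verified Lean document; each statement's English description precedes it below -/
import Mathlib

section
/- Let N ⊆ M be a symmetric Markov extension with index λ⁻¹. Then the basic construction M₁ = M ⊗_N M = M e₁ M (with Jones idempotent e₁ = 1 ⊗ 1 and conditional expectation E_M : M₁ → M given by E_M(m e₁ m') = λ m m') is a symmetric Markov extension of M with Markov trace T₀ = T ∘ E, and it satisfies: (1) M₁ = M e₁ M; (2) E_M(e₁) = λ 1; (3) e₁ x e₁ = e₁ E(x) = E(x) e₁ for every x ∈ M. Moreover these properties characterize M₁: if M̃ is an algebra containing M with an idempotent f and a conditional expectation Ẽ : M̃ → M such that M̃ = M f M, Ẽ(f) = λ 1, and f x f = f E(x) = E(x) f for all x ∈ M, then there is an algebra isomorphism M₁ ≅ M̃ fixing M and intertwining E_M with Ẽ. -/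
universe u v w


section BC

variable {k : Type u} [Field k] {M : Type v} [Ring M] [Algebra k M]

/-- A model of the basic construction for a conditional expectation `E` with index
scalar `lam`. -/
structure BCModel (k : Type u) [Field k] (M : Type v) [Ring M] [Algebra k M]
    (E : M →ₗ[k] M) (lam : k) (R : Type w) [Ring R] [Algebra k R] where
  ι : M →ₐ[k] R
  e : R
  EX : R →ₗ[k] M
  hee : e * e = e
  hgen : (⊤ : Submodule k R) = Submodule.span k {z : R | ∃ m m' : M, z = ι m * e * ι m'}
  hL : ∀ (m : M) (z : R), EX (ι m * z) = m * EX z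
  hR : ∀ (m : M) (z : R), EX (z * ι m) = EX z * m
  hj : ∀ x : M, e * ι x * e = e * ι (E x)
  hj' : ∀ x : M, e * ι (E x) = ι (E x) * e
  hEe : ∀ m m' : M, EX (ι m * e * ι m') = lam • (m * m')

namespace BCModel

variable {E : M →ₗ[k] M} {lam : k} {R : Type w} [Ring R] [Algebra k R]
variable (A : BCModel k M E lam R)

lemma ext_lin {V : Type*} [AddCommMonoid V] [Module k V] (L L' : R →ₗ[k] V)
    (h : ∀ a b : M, L (A.ι a * A.e * A.ι b) = L' (A.ι a * A.e * A.ι b)) : L = L' :=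
  LinearMap.ext_on A.hgen.symm (fun z hz => by
    obtain ⟨a, b, rfl⟩ := hz; exact h a b)

lemma EX_mul_e (m : M) : A.EX (A.ι m * A.e) = lam • m := by
  have := A.hEe m 1
  simpa [map_one] using this

lemma EX_e_mul (m : M) : A.EX (A.e * A.ι m) = lam • m := by
  have := A.hEe 1 m
  simpa [map_one] using this

lemma prod_collapse (a b c d : M) :
    (A.ι a * A.e * A.ι b) * (A.ι c * A.e * A.ι d)
      = A.ι (a * E (b * c)) * A.e * A.ι d := by
  have h1 : (A.ι a * A.e * A.ι b) * (A.ι c * A.e * A.ι d)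
      = A.ι a * (A.e * A.ι (b * c) * A.e) * A.ι d := by
    rw [map_mul A.ι b c]; simp only [mul_assoc]
  rw [h1, A.hj (b * c), A.hj' (b * c), map_mul A.ι a (E (b * c))]
  simp only [mul_assoc]

lemma coeff (hlam : lam ≠ 0) (a b m : M) :
    A.EX ((A.ι a * A.e * A.ι b) * (lam⁻¹ • (A.ι m * A.e)))
      = a * E (b * m) := by
  have h1 : (A.ι a * A.e * A.ι b) * (A.ι m * A.e)
      = A.ι a * (A.e * A.ι (b * m) * A.e) := by
    rw [map_mul A.ι b m]; simp only [mul_assoc]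
  rw [mul_smul_comm, map_smul, h1, A.hj (b * m), A.hL, A.EX_e_mul,
    mul_smul_comm, smul_smul, inv_mul_cancel₀ hlam, one_smul]

variable {nE : ℕ} (xb yb : Fin nE → M)

/-- Cross-model dual basis identity on generators: works between two models. -/
lemma cross {R' : Type w} [Ring R'] [Algebra k R'] (B : BCModel k M E lam R')
    (hlam : lam ≠ 0) (hdual1 : ∀ m : M, ∑ i, E (m * xb i) * yb i = m) (a b : M) :
    ∑ i, B.ι (A.EX ((A.ι a * A.e * A.ι b) * (lam⁻¹ • (A.ι (xb i) * A.e))))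
        * (B.e * B.ι (yb i))
      = B.ι a * B.e * B.ι b := by
  have key : ∀ i, B.ι (A.EX ((A.ι a * A.e * A.ι b) * (lam⁻¹ • (A.ι (xb i) * A.e))))
      * (B.e * B.ι (yb i)) = B.ι a * (B.e * B.ι (E (b * xb i) * yb i)) := by
    intro i
    rw [A.coeff hlam, map_mul B.ι a (E (b * xb i)), map_mul B.ι (E (b * xb i)) (yb i)]
    have h2 : B.ι (E (b * xb i)) * (B.e * B.ι (yb i))
        = B.e * (B.ι (E (b * xb i)) * B.ι (yb i)) := by
      rw [← mul_assoc, ← B.hj', mul_assoc]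
    rw [mul_assoc, h2]
  calc ∑ i, B.ι (A.EX ((A.ι a * A.e * A.ι b) * (lam⁻¹ • (A.ι (xb i) * A.e))))
        * (B.e * B.ι (yb i))
      = ∑ i, B.ι a * (B.e * B.ι (E (b * xb i) * yb i)) :=
        Finset.sum_congr rfl fun i _ => key i
    _ = B.ι a * (B.e * B.ι (∑ i, E (b * xb i) * yb i)) := by
        rw [map_sum, Finset.mul_sum, Finset.mul_sum]
    _ = B.ι a * B.e * B.ι b := by rw [hdual1 b, mul_assoc]

/-- The dual basis identity, first form (all `z`). -/
lemma dual1 (hlam : lam ≠ 0) (hdual1 : ∀ m : M, ∑ i, E (m * xb i) * yb i = m) :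
    ∀ z : R, ∑ i, A.ι (A.EX (z * (lam⁻¹ • (A.ι (xb i) * A.e)))) * (A.e * A.ι (yb i)) = z := by
  set L : R →ₗ[k] R := ∑ i : Fin nE,
    (LinearMap.mulRight k (A.e * A.ι (yb i))).comp
      (A.ι.toLinearMap.comp (A.EX.comp (LinearMap.mulRight k (lam⁻¹ • (A.ι (xb i) * A.e)))))
    with hLdef
  have hLz : ∀ z : R, L z
      = ∑ i, A.ι (A.EX (z * (lam⁻¹ • (A.ι (xb i) * A.e)))) * (A.e * A.ι (yb i)) := by
    intro z
    simp [hLdef, LinearMap.sum_apply, mul_assoc]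
  have hid : L = LinearMap.id := by
    refine A.ext_lin L LinearMap.id (fun a b => ?_)
    rw [hLz, LinearMap.id_apply]
    exact A.cross xb yb A hlam hdual1 a b
  intro z
  rw [← hLz, hid, LinearMap.id_apply]

/-- The dual basis identity, second form. -/
lemma dual2 (hlam : lam ≠ 0) (hdual2 : ∀ m : M, ∑ i, xb i * E (yb i * m) = m) :
    ∀ z : R, ∑ i, (lam⁻¹ • (A.ι (xb i) * A.e)) * A.ι (A.EX ((A.e * A.ι (yb i)) * z)) = z := by
  set L : R →ₗ[k] R := ∑ i : Fin nE,
    (LinearMap.mulLeft k (lam⁻¹ • (A.ι (xb i) * A.e))).comp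
      (A.ι.toLinearMap.comp (A.EX.comp (LinearMap.mulLeft k (A.e * A.ι (yb i)))))
    with hLdef
  have hLz : ∀ z : R, L z
      = ∑ i, (lam⁻¹ • (A.ι (xb i) * A.e)) * A.ι (A.EX ((A.e * A.ι (yb i)) * z)) := by
    intro z
    simp [hLdef, LinearMap.sum_apply, mul_assoc]
  have hid : L = LinearMap.id := by
    refine A.ext_lin L LinearMap.id (fun a b => ?_)
    rw [hLz, LinearMap.id_apply]
    have key : ∀ i, (lam⁻¹ • (A.ι (xb i) * A.e))
        * A.ι (A.EX ((A.e * A.ι (yb i)) * (A.ι a * A.e * A.ι b)))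
        = A.ι (xb i * E (yb i * a)) * (A.e * A.ι b) := by
      intro i
      have h1 : (A.e * A.ι (yb i)) * (A.ι a * A.e * A.ι b)
          = (A.e * A.ι (yb i * a) * A.e) * A.ι b := by
        rw [map_mul A.ι (yb i) a]; simp only [mul_assoc]
      rw [h1, A.hj (yb i * a), A.hR, A.EX_e_mul]
      rw [smul_mul_assoc]
      have h3 : A.ι (lam • E (yb i * a) * b) = lam • A.ι (E (yb i * a) * b) := by
        rw [smul_mul_assoc, map_smul]
      rw [h3, mul_smul_comm, smul_smul, inv_mul_cancel₀ hlam, one_smul]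
      rw [map_mul A.ι (E (yb i * a)) b, map_mul A.ι (xb i) (E (yb i * a))]
      calc A.ι (xb i) * A.e * (A.ι (E (yb i * a)) * A.ι b)
          = A.ι (xb i) * (A.e * A.ι (E (yb i * a))) * A.ι b := by
            simp only [mul_assoc]
        _ = A.ι (xb i) * (A.ι (E (yb i * a)) * A.e) * A.ι b := by rw [A.hj']
        _ = A.ι (xb i) * A.ι (E (yb i * a)) * (A.e * A.ι b) := by
            simp only [mul_assoc]
    calc ∑ i, (lam⁻¹ • (A.ι (xb i) * A.e))
          * A.ι (A.EX ((A.e * A.ι (yb i)) * (A.ι a * A.e * A.ι b)))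
        = ∑ i, A.ι (xb i * E (yb i * a)) * (A.e * A.ι b) :=
          Finset.sum_congr rfl fun i _ => key i
      _ = A.ι (∑ i, xb i * E (yb i * a)) * (A.e * A.ι b) := by
          rw [map_sum, Finset.sum_mul]
      _ = A.ι a * A.e * A.ι b := by rw [hdual2 a, mul_assoc]
  intro z
  rw [← hLz, hid, LinearMap.id_apply]

lemma sum_one (hlam : lam ≠ 0) (hdual1 : ∀ m : M, ∑ i, E (m * xb i) * yb i = m) :
    ∑ i, A.ι (xb i) * (A.e * A.ι (yb i)) = 1 := by
  have h := A.dual1 xb yb hlam hdual1 1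
  have key : ∀ i, A.ι (A.EX ((1 : R) * (lam⁻¹ • (A.ι (xb i) * A.e)))) = A.ι (xb i) := by
    intro i
    rw [one_mul, map_smul, A.EX_mul_e, smul_smul, inv_mul_cancel₀ hlam, one_smul]
  rw [← h]
  exact Finset.sum_congr rfl fun i _ => by rw [key i]

lemma expand_iota (hlam : lam ≠ 0) (hdual1 : ∀ m : M, ∑ i, E (m * xb i) * yb i = m)
    (m : M) : A.ι m = ∑ i, A.ι (m * xb i) * A.e * A.ι (yb i) := by
  conv_lhs => rw [← mul_one (A.ι m), ← A.sum_one xb yb hlam hdual1]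
  rw [Finset.mul_sum]
  exact Finset.sum_congr rfl fun i _ => by rw [map_mul A.ι m (xb i)]; simp only [mul_assoc]

lemma mul_e_eq (hlam : lam ≠ 0) :
    ∀ z : R, z * A.e = lam⁻¹ • (A.ι (A.EX (z * A.e)) * A.e) := by
  have hid : (LinearMap.mulRight k A.e : R →ₗ[k] R)
      = lam⁻¹ • ((LinearMap.mulRight k A.e).comp
          (A.ι.toLinearMap.comp (A.EX.comp (LinearMap.mulRight k A.e)))) := by
    refine A.ext_lin _ _ (fun a b => ?_)
    simp only [LinearMap.mulRight_apply, LinearMap.smul_apply, LinearMap.comp_apply,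
      AlgHom.toLinearMap_apply]
    have h1 : A.ι a * A.e * A.ι b * A.e = A.ι (a * E b) * A.e := by
      rw [map_mul A.ι a (E b)]
      calc A.ι a * A.e * A.ι b * A.e = A.ι a * (A.e * A.ι b * A.e) := by
            simp only [mul_assoc]
        _ = A.ι a * (A.e * A.ι (E b)) := by rw [A.hj]
        _ = A.ι a * (A.ι (E b) * A.e) := by rw [A.hj']
        _ = A.ι a * A.ι (E b) * A.e := by rw [mul_assoc]
    rw [h1, A.EX_mul_e, map_smul, smul_mul_assoc, smul_smul, inv_mul_cancel₀ hlam, one_smul]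
  intro z
  have := LinearMap.congr_fun hid z
  simpa [map_smul, smul_mul_assoc] using this

lemma e_mul_eq (hlam : lam ≠ 0) :
    ∀ z : R, A.e * z = lam⁻¹ • (A.e * A.ι (A.EX (A.e * z))) := by
  have hid : (LinearMap.mulLeft k A.e : R →ₗ[k] R)
      = lam⁻¹ • ((LinearMap.mulLeft k A.e).comp
          (A.ι.toLinearMap.comp (A.EX.comp (LinearMap.mulLeft k A.e)))) := by
    refine A.ext_lin _ _ (fun a b => ?_)
    simp only [LinearMap.mulLeft_apply, LinearMap.smul_apply, LinearMap.comp_apply,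
      AlgHom.toLinearMap_apply]
    have h1 : A.e * (A.ι a * A.e * A.ι b) = A.e * A.ι (E a * b) := by
      rw [map_mul A.ι (E a) b]
      calc A.e * (A.ι a * A.e * A.ι b) = (A.e * A.ι a * A.e) * A.ι b := by
            simp only [mul_assoc]
        _ = A.e * A.ι (E a) * A.ι b := by rw [A.hj]
        _ = A.e * (A.ι (E a) * A.ι b) := by rw [mul_assoc]
    rw [h1, A.EX_e_mul, map_smul, mul_smul_comm, smul_smul, inv_mul_cancel₀ hlam, one_smul]
  intro z
  have := LinearMap.congr_fun hid z
  simpa [map_smul, mul_smul_comm] using this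

end BCModel

end BC



/-- Basic Construction theorem: let `N ⊆ M` be a symmetric Markov
extension with index `λ⁻¹`, and let `M₁` (modelled by an algebra `R1` containing
`M` via `ι1`) be the basic construction, i.e. an algebra with idempotent `e₁` and
conditional expectation `E_M : M₁ → M` satisfying (1) `M₁ = M e₁ M`,
(2) `E_M(e₁) = λ 1`, and (3) `e₁ x e₁ = e₁ E(x) = E(x) e₁` for all `x ∈ M`, with
`E_M(m e₁ m') = λ m m'`.  Then `M₁` is a symmetric Markov extension of `M` with
Markov trace `T₀ = T ∘ E`, index `λ⁻¹` and dual bases `{λ⁻¹ xᵢ e₁}`, `{e₁ yᵢ}`;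
moreover these properties characterize `M₁`: any algebra `M̃` containing `M` with
an idempotent `f` and a conditional expectation `Ẽ : M̃ → M` satisfying the same
three properties is isomorphic to `M₁` by an algebra isomorphism fixing `M` and
intertwining `E_M` with `Ẽ`. -/
theorem stmt0 {k : Type u} [Field k] {M : Type v} [Ring M] [Algebra k M]
    (N : Subalgebra k M) (E : M →ₗ[k] M) (lam : k) (hlam : lam ≠ 0)
    (T0 : M →ₗ[k] k)
    -- Markov extension data for E : M → N
    (nE : ℕ) (xb yb : Fin nE → M)
    (hE_mem : ∀ x : M, E x ∈ N) (hE_one : E 1 = 1)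
    (hE_left : ∀ n ∈ N, ∀ x : M, E (n * x) = n * E x)
    (hE_right : ∀ n ∈ N, ∀ x : M, E (x * n) = E x * n)
    (hdual1 : ∀ m : M, ∑ i, E (m * xb i) * yb i = m)
    (hdual2 : ∀ m : M, ∑ i, xb i * E (yb i * m) = m)
    (hindex : ∑ i, xb i * yb i = lam⁻¹ • (1 : M))
    -- the Markov trace: T₀ = T ∘ E is a normalized trace on M with T₀ ∘ E = T₀
    (hT0_one : T0 1 = 1)
    (hT0_tr : ∀ x y : M, T0 (x * y) = T0 (y * x))
    (hT0E : ∀ x : M, T0 (E x) = T0 x)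
    -- symmetry: E u = u E for all u ∈ U = C_M(N)
    (hsymm : ∀ u : M, (∀ y ∈ N, u * y = y * u) → ∀ x : M, E (u * x) = E (x * u))
    -- the basic construction M₁ = M e₁ M, modelled by R1 ⊇ ι1(M)
    {R1 : Type w} [Ring R1] [Algebra k R1] (ι1 : M →ₐ[k] R1)
    (hι1 : Function.Injective ι1) (e1 : R1) (EM : R1 →ₗ[k] M)
    (he1_idem : e1 * e1 = e1)
    (hgen1 : (⊤ : Submodule k R1)
      = Submodule.span k {z : R1 | ∃ m m' : M, z = ι1 m * e1 * ι1 m'})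
    (hEM_id : ∀ m : M, EM (ι1 m) = m)
    (hEM_left : ∀ m : M, ∀ z : R1, EM (ι1 m * z) = m * EM z)
    (hEM_right : ∀ m : M, ∀ z : R1, EM (z * ι1 m) = EM z * m)
    (hEM_e1 : ∀ m m' : M, EM (ι1 m * e1 * ι1 m') = lam • (m * m'))
    (hEM_e1' : EM e1 = lam • (1 : M))
    (hjones : ∀ x : M, e1 * ι1 x * e1 = e1 * ι1 (E x))
    (hjones' : ∀ x : M, e1 * ι1 (E x) = ι1 (E x) * e1) :
    -- (a) M₁/M is a symmetric Markov extension with Markov trace T₀ = T ∘ E,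
    --     conditional expectation E_M, dual bases {λ⁻¹ xᵢ e₁}, {e₁ yᵢ} and index λ⁻¹
    EM 1 = 1 ∧
    (∀ z : R1,
      ∑ i, ι1 (EM (z * (lam⁻¹ • (ι1 (xb i) * e1)))) * (e1 * ι1 (yb i)) = z) ∧
    (∀ z : R1,
      ∑ i, (lam⁻¹ • (ι1 (xb i) * e1)) * ι1 (EM ((e1 * ι1 (yb i)) * z)) = z) ∧
    (∑ i, (lam⁻¹ • (ι1 (xb i) * e1)) * (e1 * ι1 (yb i))) = lam⁻¹ • (1 : R1) ∧
    (∀ z z' : R1, T0 (EM (z * z')) = T0 (EM (z' * z))) ∧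
    T0 (EM 1) = 1 ∧
    (∀ u : R1, (∀ m : M, u * ι1 m = ι1 m * u) →
      ∀ z : R1, EM (u * z) = EM (z * u)) ∧
    -- (b) uniqueness: any algebra M̃ containing M with an idempotent f and a
    --     conditional expectation Ẽ satisfying properties (1), (2), (3) is
    --     isomorphic to M₁ by an isomorphism fixing M and intertwining E_M with Ẽ
    (∀ (R2 : Type w) [Ring R2] [Algebra k R2], ∀ (ι2 : M →ₐ[k] R2),
      Function.Injective ι2 → ∀ (f : R2) (Et : R2 →ₗ[k] M),
      f * f = f →
      ((⊤ : Submodule k R2)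
        = Submodule.span k {z : R2 | ∃ m m' : M, z = ι2 m * f * ι2 m'}) →
      (∀ m : M, Et (ι2 m) = m) →
      (∀ m : M, ∀ z : R2, Et (ι2 m * z) = m * Et z) →
      (∀ m : M, ∀ z : R2, Et (z * ι2 m) = Et z * m) →
      (Et f = lam • (1 : M)) →
      (∀ x : M, f * ι2 x * f = f * ι2 (E x)) →
      (∀ x : M, f * ι2 (E x) = ι2 (E x) * f) →
      ∃ Φ : R1 ≃ₐ[k] R2,
        (∀ m : M, Φ (ι1 m) = ι2 m) ∧ (∀ z : R1, Et (Φ z) = EM z)) := by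
  have hEN : ∀ n ∈ N, E n = n := by
    intro n hn
    have h := hE_left n hn 1
    rw [mul_one, hE_one, mul_one] at h
    exact h
  have hcancel : ∀ x y : M, lam • x = lam • y → x = y := by
    intro x y h
    have h2 := congrArg (fun m : M => lam⁻¹ • m) h
    simpa [smul_smul, inv_mul_cancel₀ hlam] using h2
  let A1 : BCModel k M E lam R1 :=
    ⟨ι1, e1, EM, he1_idem, hgen1, hEM_left, hEM_right, hjones, hjones', hEM_e1⟩
  have ext1R1 : ∀ (L L' : R1 →ₗ[k] R1),
      (∀ a b : M, L (ι1 a * e1 * ι1 b) = L' (ι1 a * e1 * ι1 b)) → L = L' :=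
    fun L L' h => A1.ext_lin L L' h
  have ext1M : ∀ (L L' : R1 →ₗ[k] M),
      (∀ a b : M, L (ι1 a * e1 * ι1 b) = L' (ι1 a * e1 * ι1 b)) → L = L' :=
    fun L L' h => A1.ext_lin L L' h
  have ext1k : ∀ (L L' : R1 →ₗ[k] k),
      (∀ a b : M, L (ι1 a * e1 * ι1 b) = L' (ι1 a * e1 * ι1 b)) → L = L' :=
    fun L L' h => A1.ext_lin L L' h
  have prod1 : ∀ a b c d : M, (ι1 a * e1 * ι1 b) * (ι1 c * e1 * ι1 d)
      = ι1 (a * E (b * c)) * e1 * ι1 d := fun a b c d => A1.prod_collapse a b c d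
  have hF1 : ∀ m : M, EM (ι1 m * e1) = lam • m := fun m => A1.EX_mul_e m
  have hF2 : ∀ m : M, EM (e1 * ι1 m) = lam • m := fun m => A1.EX_e_mul m
  have hEM_one : EM 1 = 1 := by
    calc EM 1 = EM (ι1 1) := by rw [map_one ι1]
      _ = 1 := hEM_id 1
  have h2 : ∀ z : R1,
      ∑ i, ι1 (EM (z * (lam⁻¹ • (ι1 (xb i) * e1)))) * (e1 * ι1 (yb i)) = z :=
    A1.dual1 xb yb hlam hdual1
  have h3 : ∀ z : R1,
      ∑ i, (lam⁻¹ • (ι1 (xb i) * e1)) * ι1 (EM ((e1 * ι1 (yb i)) * z)) = z :=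
    A1.dual2 xb yb hlam hdual2
  have hsum1 : ∑ i, ι1 (xb i) * (e1 * ι1 (yb i)) = 1 := A1.sum_one xb yb hlam hdual1
  have h4 : (∑ i, (lam⁻¹ • (ι1 (xb i) * e1)) * (e1 * ι1 (yb i))) = lam⁻¹ • (1 : R1) := by
    calc ∑ i, (lam⁻¹ • (ι1 (xb i) * e1)) * (e1 * ι1 (yb i))
        = ∑ i, lam⁻¹ • (ι1 (xb i) * (e1 * ι1 (yb i))) := by
          refine Finset.sum_congr rfl fun i _ => ?_
          rw [smul_mul_assoc]
          congr 1
          calc ι1 (xb i) * e1 * (e1 * ι1 (yb i))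
              = ι1 (xb i) * (e1 * e1) * ι1 (yb i) := by simp only [mul_assoc]
            _ = ι1 (xb i) * (e1 * ι1 (yb i)) := by rw [he1_idem, mul_assoc]
      _ = lam⁻¹ • ∑ i, ι1 (xb i) * (e1 * ι1 (yb i)) := by rw [Finset.smul_sum]
      _ = lam⁻¹ • (1 : R1) := by rw [hsum1]
  have prodEM : ∀ a b c d : M,
      EM ((ι1 a * e1 * ι1 b) * (ι1 c * e1 * ι1 d)) = lam • (a * E (b * c) * d) := by
    intro a b c d
    rw [prod1 a b c d]
    exact hEM_e1 _ _
  have traceM : ∀ a b c d : M, T0 (a * E (b * c) * d) = T0 (c * E (d * a) * b) := by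
    intro a b c d
    have L1 : T0 (a * E (b * c) * d) = T0 (E (b * c) * E (d * a)) := by
      rw [mul_assoc, hT0_tr a (E (b * c) * d), mul_assoc,
        ← hT0E (E (b * c) * (d * a)), hE_left (E (b * c)) (hE_mem _) (d * a)]
    have L2 : T0 (c * E (d * a) * b) = T0 (E (d * a) * E (b * c)) := by
      rw [mul_assoc, hT0_tr c (E (d * a) * b), mul_assoc,
        ← hT0E (E (d * a) * (b * c)), hE_left (E (d * a)) (hE_mem _) (b * c)]
    rw [L1, L2, hT0_tr]
  have h5 : ∀ z z' : R1, T0 (EM (z * z')) = T0 (EM (z' * z)) := by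
    have base : ∀ a b : M, ∀ z' : R1,
        T0 (EM ((ι1 a * e1 * ι1 b) * z')) = T0 (EM (z' * (ι1 a * e1 * ι1 b))) := by
      intro a b
      have hmaps : T0 ∘ₗ (EM ∘ₗ LinearMap.mulLeft k (ι1 a * e1 * ι1 b))
          = T0 ∘ₗ (EM ∘ₗ LinearMap.mulRight k (ι1 a * e1 * ι1 b)) := by
        refine ext1k _ _ fun c d => ?_
        simp only [LinearMap.comp_apply, LinearMap.mulLeft_apply, LinearMap.mulRight_apply]
        rw [prodEM, prodEM, map_smul T0, map_smul T0, traceM a b c d]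
      intro z'
      have h := LinearMap.congr_fun hmaps z'
      simpa only [LinearMap.comp_apply, LinearMap.mulLeft_apply,
        LinearMap.mulRight_apply] using h
    intro z z'
    have hmaps : T0 ∘ₗ (EM ∘ₗ LinearMap.mulRight k z')
        = T0 ∘ₗ (EM ∘ₗ LinearMap.mulLeft k z') := by
      refine ext1k _ _ fun a b => ?_
      simp only [LinearMap.comp_apply, LinearMap.mulLeft_apply, LinearMap.mulRight_apply]
      exact base a b z'
    have h := LinearMap.congr_fun hmaps z
    simpa only [LinearMap.comp_apply, LinearMap.mulLeft_apply,
      LinearMap.mulRight_apply] using h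
  have h6 : T0 (EM 1) = 1 := by rw [hEM_one]; exact hT0_one
  have hcomm_e : ∀ n ∈ N, e1 * ι1 n = ι1 n * e1 := by
    intro n hn
    have h := hjones' n
    rw [hEN n hn] at h
    exact h
  have h7 : ∀ u : R1, (∀ m : M, u * ι1 m = ι1 m * u) →
      ∀ z : R1, EM (u * z) = EM (z * u) := by
    intro u hu
    set c0 : M := lam⁻¹ • EM (u * e1) with hc0
    set d0 : M := lam⁻¹ • EM (e1 * u) with hd0
    have hue : u * e1 = ι1 c0 * e1 := by
      calc u * e1 = lam⁻¹ • (ι1 (EM (u * e1)) * e1) := A1.mul_e_eq hlam u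
        _ = ι1 c0 * e1 := by
            rw [hc0, map_smul ι1 lam⁻¹ (EM (u * e1)), smul_mul_assoc]
    have heu : e1 * u = e1 * ι1 d0 := by
      calc e1 * u = lam⁻¹ • (e1 * ι1 (EM (e1 * u))) := A1.e_mul_eq hlam u
        _ = e1 * ι1 d0 := by
            rw [hd0, map_smul ι1 lam⁻¹ (EM (e1 * u)), mul_smul_comm]
    have hc0N : ∀ n ∈ N, c0 * n = n * c0 := by
      intro n hn
      have w1 : EM (u * (ι1 n * e1)) = lam • (n * c0) := by
        have hx : u * (ι1 n * e1) = ι1 (n * c0) * e1 := by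
          rw [← mul_assoc, hu n, mul_assoc, hue, map_mul ι1 n c0]
          simp only [mul_assoc]
        rw [hx, hF1]
      have w2 : EM (u * (ι1 n * e1)) = lam • (c0 * n) := by
        have hx : u * (ι1 n * e1) = (ι1 c0 * e1) * ι1 n := by
          rw [← hcomm_e n hn, ← mul_assoc, hue]
        rw [hx, hEM_right n, hF1, smul_mul_assoc]
      exact hcancel _ _ (w2.symm.trans w1)
    have hd0N : ∀ n ∈ N, d0 * n = n * d0 := by
      intro n hn
      have w1 : EM ((e1 * ι1 n) * u) = lam • (d0 * n) := by
        have hx : (e1 * ι1 n) * u = (e1 * ι1 d0) * ι1 n := by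
          rw [mul_assoc, ← hu n, ← mul_assoc, heu]
        rw [hx, hEM_right n, hF2, smul_mul_assoc]
      have w2 : EM ((e1 * ι1 n) * u) = lam • (n * d0) := by
        have hx : (e1 * ι1 n) * u = ι1 n * (e1 * ι1 d0) := by
          rw [hcomm_e n hn, mul_assoc, heu]
        rw [hx, hEM_left n, hF2, mul_smul_comm]
      exact hcancel _ _ (w1.symm.trans w2)
    have hstar : ∀ m : M, E (d0 * m) = E (m * c0) := by
      intro m
      have hx : e1 * (u * ι1 m) * e1 = e1 * ι1 (E (d0 * m)) := by
        calc e1 * (u * ι1 m) * e1 = ((e1 * u) * ι1 m) * e1 := by simp only [mul_assoc]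
          _ = ((e1 * ι1 d0) * ι1 m) * e1 := by rw [heu]
          _ = e1 * ι1 (d0 * m) * e1 := by
              rw [map_mul ι1 d0 m]; simp only [mul_assoc]
          _ = e1 * ι1 (E (d0 * m)) := hjones _
      have hy : e1 * (ι1 m * u) * e1 = e1 * ι1 (E (m * c0)) := by
        calc e1 * (ι1 m * u) * e1 = (e1 * ι1 m) * (u * e1) := by simp only [mul_assoc]
          _ = (e1 * ι1 m) * (ι1 c0 * e1) := by rw [hue]
          _ = e1 * ι1 (m * c0) * e1 := by
              rw [map_mul ι1 m c0]; simp only [mul_assoc]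
          _ = e1 * ι1 (E (m * c0)) := hjones _
      have h3' : EM (e1 * ι1 (E (d0 * m))) = EM (e1 * ι1 (E (m * c0))) := by
        rw [← hx, ← hy, hu m]
      rw [hF2, hF2] at h3'
      exact hcancel _ _ h3'
    have hcd : d0 = c0 := by
      have hsymd := hsymm d0 (fun y hy => hd0N y hy)
      calc d0 = ∑ i, xb i * E (yb i * d0) := (hdual2 d0).symm
        _ = ∑ i, xb i * E (yb i * c0) := by
            refine Finset.sum_congr rfl fun i _ => ?_
            rw [← hsymd (yb i), hstar (yb i)]
        _ = c0 := hdual2 c0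
    have hkey : EM (u * e1) = EM (e1 * u) := by
      calc EM (u * e1) = EM (ι1 c0 * e1) := by rw [hue]
        _ = lam • c0 := hF1 c0
        _ = lam • d0 := by rw [hcd]
        _ = EM (e1 * ι1 d0) := (hF2 d0).symm
        _ = EM (e1 * u) := by rw [← heu]
    intro z
    have hmaps : EM ∘ₗ LinearMap.mulLeft k u = EM ∘ₗ LinearMap.mulRight k u := by
      refine ext1M _ _ fun a b => ?_
      simp only [LinearMap.comp_apply, LinearMap.mulLeft_apply, LinearMap.mulRight_apply]
      have hx : u * (ι1 a * e1 * ι1 b) = ι1 a * ((u * e1) * ι1 b) := by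
        rw [← mul_assoc, ← mul_assoc, hu a]
        simp only [mul_assoc]
      have hy : (ι1 a * e1 * ι1 b) * u = ι1 a * ((e1 * u) * ι1 b) := by
        rw [mul_assoc, ← hu b]
        simp only [mul_assoc]
      rw [hx, hy, hEM_left a, hEM_left a, hEM_right b, hEM_right b, hkey]
    have h := LinearMap.congr_fun hmaps z
    simpa only [LinearMap.comp_apply, LinearMap.mulLeft_apply,
      LinearMap.mulRight_apply] using h
  refine ⟨hEM_one, h2, h3, h4, h5, h6, h7, ?_⟩
  intro R2 _ _ ι2 hι2 f Et hf_idem hgen2 hEt_id hEt_left hEt_right hEt_f hj2 hj2'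
  have hEe2 : ∀ m m' : M, Et (ι2 m * f * ι2 m') = lam • (m * m') := by
    intro m m'
    rw [mul_assoc, hEt_left, hEt_right, hEt_f, smul_mul_assoc, one_mul, mul_smul_comm]
  let A2 : BCModel k M E lam R2 :=
    ⟨ι2, f, Et, hf_idem, hgen2, hEt_left, hEt_right, hj2, hj2', hEe2⟩
  have ext1R2 : ∀ (L L' : R1 →ₗ[k] R2),
      (∀ a b : M, L (ι1 a * e1 * ι1 b) = L' (ι1 a * e1 * ι1 b)) → L = L' :=
    fun L L' h => A1.ext_lin L L' h
  have ext2R2 : ∀ (L L' : R2 →ₗ[k] R2),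
      (∀ a b : M, L (ι2 a * f * ι2 b) = L' (ι2 a * f * ι2 b)) → L = L' :=
    fun L L' h => A2.ext_lin L L' h
  have ext2R1 : ∀ (L L' : R2 →ₗ[k] R1),
      (∀ a b : M, L (ι2 a * f * ι2 b) = L' (ι2 a * f * ι2 b)) → L = L' :=
    fun L L' h => A2.ext_lin L L' h
  have prod2 : ∀ a b c d : M, (ι2 a * f * ι2 b) * (ι2 c * f * ι2 d)
      = ι2 (a * E (b * c)) * f * ι2 d := fun a b c d => A2.prod_collapse a b c d
  set ΦL : R1 →ₗ[k] R2 := ∑ i : Fin nE,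
    (LinearMap.mulRight k (f * ι2 (yb i))).comp
      (ι2.toLinearMap.comp (EM.comp (LinearMap.mulRight k (lam⁻¹ • (ι1 (xb i) * e1)))))
    with hΦdef
  set ΨL : R2 →ₗ[k] R1 := ∑ i : Fin nE,
    (LinearMap.mulRight k (e1 * ι1 (yb i))).comp
      (ι1.toLinearMap.comp (Et.comp (LinearMap.mulRight k (lam⁻¹ • (ι2 (xb i) * f)))))
    with hΨdef
  have hΦapp : ∀ z : R1, ΦL z
      = ∑ i, ι2 (EM (z * (lam⁻¹ • (ι1 (xb i) * e1)))) * (f * ι2 (yb i)) := by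
    intro z
    simp [hΦdef, LinearMap.sum_apply, mul_assoc]
  have hΨapp : ∀ z : R2, ΨL z
      = ∑ i, ι1 (Et (z * (lam⁻¹ • (ι2 (xb i) * f)))) * (e1 * ι1 (yb i)) := by
    intro z
    simp [hΨdef, LinearMap.sum_apply, mul_assoc]
  have hΦgen : ∀ a b : M, ΦL (ι1 a * e1 * ι1 b) = ι2 a * f * ι2 b := by
    intro a b
    rw [hΦapp]
    exact A1.cross xb yb A2 hlam hdual1 a b
  have hΨgen : ∀ a b : M, ΨL (ι2 a * f * ι2 b) = ι1 a * e1 * ι1 b := by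
    intro a b
    rw [hΨapp]
    exact A2.cross xb yb A1 hlam hdual1 a b
  have hΨΦ : ∀ z : R1, ΨL (ΦL z) = z := by
    have h : ΨL ∘ₗ ΦL = LinearMap.id := by
      refine ext1R1 _ _ fun a b => ?_
      simp only [LinearMap.comp_apply, LinearMap.id_apply]
      rw [hΦgen, hΨgen]
    intro z
    have hz := LinearMap.congr_fun h z
    simpa only [LinearMap.comp_apply, LinearMap.id_apply] using hz
  have hΦΨ : ∀ z : R2, ΦL (ΨL z) = z := by
    have h : ΦL ∘ₗ ΨL = LinearMap.id := by
      refine ext2R2 _ _ fun a b => ?_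
      simp only [LinearMap.comp_apply, LinearMap.id_apply]
      rw [hΨgen, hΦgen]
    intro z
    have hz := LinearMap.congr_fun h z
    simpa only [LinearMap.comp_apply, LinearMap.id_apply] using hz
  have hsum2 : ∑ i, ι2 (xb i) * (f * ι2 (yb i)) = 1 := A2.sum_one xb yb hlam hdual1
  have hΦone : ΦL 1 = 1 := by
    have h1 : (1 : R1) = ∑ i, ι1 (xb i) * (e1 * ι1 (yb i)) := hsum1.symm
    rw [h1, map_sum]
    calc ∑ i, ΦL (ι1 (xb i) * (e1 * ι1 (yb i)))
        = ∑ i, ι2 (xb i) * (f * ι2 (yb i)) := by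
          refine Finset.sum_congr rfl fun i _ => ?_
          rw [← mul_assoc, hΦgen, mul_assoc]
      _ = 1 := hsum2
  have hΦmul : ∀ z z' : R1, ΦL (z * z') = ΦL z * ΦL z' := by
    have base : ∀ a b : M, ∀ z' : R1,
        ΦL ((ι1 a * e1 * ι1 b) * z') = ΦL (ι1 a * e1 * ι1 b) * ΦL z' := by
      intro a b
      have h : ΦL ∘ₗ LinearMap.mulLeft k (ι1 a * e1 * ι1 b)
          = (LinearMap.mulLeft k (ΦL (ι1 a * e1 * ι1 b))) ∘ₗ ΦL := by
        refine ext1R2 _ _ fun c d => ?_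
        simp only [LinearMap.comp_apply, LinearMap.mulLeft_apply]
        rw [prod1 a b c d, hΦgen, hΦgen, hΦgen, prod2 a b c d]
      intro z'
      have hz := LinearMap.congr_fun h z'
      simpa only [LinearMap.comp_apply, LinearMap.mulLeft_apply] using hz
    intro z z'
    have h : ΦL ∘ₗ LinearMap.mulRight k z'
        = (LinearMap.mulRight k (ΦL z')) ∘ₗ ΦL := by
      refine ext1R2 _ _ fun a b => ?_
      simp only [LinearMap.comp_apply, LinearMap.mulRight_apply]
      exact base a b z'
    have hz := LinearMap.congr_fun h z
    simpa only [LinearMap.comp_apply, LinearMap.mulRight_apply] using hz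
  let ΦA : R1 →ₐ[k] R2 := AlgHom.ofLinearMap ΦL hΦone hΦmul
  have hinj : Function.Injective ΦA := Function.LeftInverse.injective (g := ΨL) hΨΦ
  have hsurj : Function.Surjective ΦA :=
    Function.RightInverse.surjective (f := ΦA) (g := ΨL) hΦΨ
  let Φeq : R1 ≃ₐ[k] R2 := AlgEquiv.ofBijective ΦA ⟨hinj, hsurj⟩
  have hΦι : ∀ m : M, ΦL (ι1 m) = ι2 m := by
    intro m
    have he1' : ι1 m = ∑ i, ι1 (m * xb i) * e1 * ι1 (yb i) :=
      A1.expand_iota xb yb hlam hdual1 m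
    have he2' : ι2 m = ∑ i, ι2 (m * xb i) * f * ι2 (yb i) :=
      A2.expand_iota xb yb hlam hdual1 m
    rw [he1', map_sum, he2']
    exact Finset.sum_congr rfl fun i _ => hΦgen _ _
  have hEt : ∀ z : R1, Et (ΦL z) = EM z := by
    have h : Et ∘ₗ ΦL = EM := by
      refine ext1M _ _ fun a b => ?_
      simp only [LinearMap.comp_apply]
      rw [hΦgen, hEe2, hEM_e1]
    intro z
    have hz := LinearMap.congr_fun h z
    simpa only [LinearMap.comp_apply] using hz
  exact ⟨Φeq, fun m => hΦι m, fun z => hEt z⟩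
end

section
/- Define T₁ := T ∘ E ∘ E_M : M₁ → k. Then T₁ ∘ φ = T₀ on U; that is, T₁(φ(u)) = T₀(u) for every u ∈ U. In particular, T₁ restricted to V = C_{M₁}(M) is a non-degenerate trace. -/
open scoped TensorProduct

/-- for a symmetric Markov extension `N ⊆ M` satisfying the symmetric
product and weak irreducibility assumptions, with basic construction `M₁ = M e₁ M`
(the ambient algebra `R` plays the role of `M₁`), conditional expectation
`E_M : M₁ → M` and `T₁ := T ∘ E ∘ E_M`, one has `T₁ ∘ φ = T₀` on `U = C_M(N)`,
where `φ(u) = ∑ xᵢ u e₁ yᵢ`; in particular `T₁` restricted to `V = C_{M₁}(M)` is a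
non-degenerate trace.  (The single functional `T` below denotes the normalized
trace `T₁` of `M₁`, which restricts to the Markov trace `T` on `N` and to
`T₀ = T ∘ E` on `M`, as expressed by the compatibility hypotheses `hTE`, `hTEM`.) -/
theorem stmt1 {k : Type*} [Field k] {R : Type*} [Ring R] [Algebra k R]
    (N M : Subalgebra k R) (hNM : N ≤ M)
    (E EM : R →ₗ[k] R) (lam : k) (hlam : lam ≠ 0) (e1 : R)
    (T : R →ₗ[k] k)
    -- Markov extension data for E : M → N
    (nE : ℕ) (xb yb : Fin nE → R)
    (hxb : ∀ i, xb i ∈ M) (hyb : ∀ i, yb i ∈ M)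
    (hE_mem : ∀ x ∈ M, E x ∈ N) (hE_one : E 1 = 1)
    (hE_left : ∀ n ∈ N, ∀ x ∈ M, E (n * x) = n * E x)
    (hE_right : ∀ n ∈ N, ∀ x ∈ M, E (x * n) = E x * n)
    (hdual1 : ∀ m ∈ M, ∑ i, E (m * xb i) * yb i = m)
    (hdual2 : ∀ m ∈ M, ∑ i, xb i * E (yb i * m) = m)
    -- symmetric product assumption
    (hindex : ∑ i, xb i * yb i = lam⁻¹ • (1 : R))
    (hindex' : ∑ i, yb i * xb i = lam⁻¹ • (1 : R))
    -- the trace T₁ = T ∘ E ∘ E_M and its compatibilities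
    (hT_one : T 1 = 1)
    (hT_tr : ∀ x y : R, T (x * y) = T (y * x))
    (hTE : ∀ x ∈ M, T (E x) = T x)
    (hTEM : ∀ x : R, T (EM x) = T x)
    -- symmetry of the Markov extension
    (hsymm : ∀ u ∈ M, (∀ y ∈ N, u * y = y * u) → ∀ x ∈ M, E (u * x) = E (x * u))
    -- the basic construction M₁ = M e₁ M (here M₁ = R is the ambient algebra)
    (he1_idem : e1 * e1 = e1)
    (he1_N : ∀ y ∈ N, e1 * y = y * e1)
    (hM1_gen : (⊤ : Submodule k R)
      = Submodule.span k {z : R | ∃ m ∈ M, ∃ m' ∈ M, z = m * e1 * m'})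
    (hEM_mem : ∀ x : R, EM x ∈ M) (hEM_one : EM 1 = 1)
    (hEM_left : ∀ m ∈ M, ∀ x : R, EM (m * x) = m * EM x)
    (hEM_right : ∀ m ∈ M, ∀ x : R, EM (x * m) = EM x * m)
    (hEM_e1 : ∀ m ∈ M, ∀ m' ∈ M, EM (m * e1 * m') = lam • (m * m'))
    (he1_jones : ∀ x ∈ M, e1 * x * e1 = e1 * E x)
    (he1_jones' : ∀ x ∈ M, e1 * E x = E x * e1)
    -- weak irreducibility: U = C_M(N) is Kanzaki separable and T₀|_U non-degenerate
    (nS : ℕ) (sp sq : Fin nS → R)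
    (hsp : ∀ i, sp i ∈ M ∧ ∀ y ∈ N, sp i * y = y * sp i)
    (hsq : ∀ i, sq i ∈ M ∧ ∀ y ∈ N, sq i * y = y * sq i)
    (hsep_one : ∑ i, sp i * sq i = 1)
    (hsep_cas : ∀ u ∈ M, (∀ y ∈ N, u * y = y * u) →
      ∑ i, (u * sp i) ⊗ₜ[k] sq i = ∑ i, sp i ⊗ₜ[k] (sq i * u))
    (hsep_symm : ∑ i, sp i ⊗ₜ[k] sq i = ∑ i, sq i ⊗ₜ[k] sp i)
    (hU_nondeg : ∀ u ∈ M, (∀ y ∈ N, u * y = y * u) →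
      (∀ u' ∈ M, (∀ y ∈ N, u' * y = y * u') → T (u * u') = 0) → u = 0) :
    -- T₁ ∘ φ = T₀ on U, where φ(u) = ∑ xᵢ u e₁ yᵢ
    (∀ u ∈ M, (∀ y ∈ N, u * y = y * u) →
      T (∑ i, xb i * u * e1 * yb i) = T u) ∧
    -- in particular T₁ restricted to V = C_{M₁}(M) is a non-degenerate trace
    (∀ v : R, (∀ y ∈ M, v * y = y * v) →
      ∀ v' : R, (∀ y ∈ M, v' * y = y * v') → T (v * v') = T (v' * v)) ∧
    (∀ v : R, (∀ y ∈ M, v * y = y * v) →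
      (∀ v' : R, (∀ y ∈ M, v' * y = y * v') → T (v * v') = 0) → v = 0) := by
  -- Part 1 : T₁(φ(u)) = T₀(u)  (in fact for every u ∈ M)
  have part1 : ∀ u ∈ M, T (∑ i, xb i * u * e1 * yb i) = T u := by
    intro u huM
    have h1 : ∀ i, T (xb i * u * e1 * yb i) = lam * T (u * yb i * xb i) := by
      intro i
      rw [← hTEM (xb i * u * e1 * yb i),
        hEM_e1 (xb i * u) (M.mul_mem (hxb i) huM) (yb i) (hyb i),
        map_smul, smul_eq_mul, mul_assoc, hT_tr]
    rw [map_sum]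
    simp only [h1]
    rw [← Finset.mul_sum, ← map_sum]
    have h2 : ∑ i, u * yb i * xb i = lam⁻¹ • u := by
      calc ∑ i, u * yb i * xb i = u * ∑ i, yb i * xb i := by
            rw [Finset.mul_sum]; exact Finset.sum_congr rfl fun i _ => (mul_assoc _ _ _)
        _ = u * (lam⁻¹ • (1 : R)) := by rw [hindex']
        _ = lam⁻¹ • u := by rw [mul_smul_comm, mul_one]
    rw [h2, map_smul, smul_eq_mul, ← mul_assoc, mul_inv_cancel₀ hlam, one_mul]
  -- φ(u) belongs to V = C_{M₁}(M) whenever u ∈ U = C_M(N)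
  have hphiV : ∀ u ∈ M, (∀ y ∈ N, u * y = y * u) →
      ∀ m ∈ M, (∑ i, xb i * u * e1 * yb i) * m = m * ∑ i, xb i * u * e1 * yb i := by
    intro u huM huN m hmM
    have key : m * ∑ i, xb i * u * e1 * yb i = (∑ j, xb j * u * e1 * yb j) * m := by
      calc m * ∑ i, xb i * u * e1 * yb i
          = ∑ i, (m * xb i) * u * e1 * yb i := by
            rw [Finset.mul_sum]
            exact Finset.sum_congr rfl fun i _ => by noncomm_ring
        _ = ∑ i, (∑ j, xb j * E (yb j * (m * xb i))) * u * e1 * yb i := by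
            refine Finset.sum_congr rfl fun i _ => by
              rw [hdual2 (m * xb i) (M.mul_mem hmM (hxb i))]
        _ = ∑ i, ∑ j, xb j * u * e1 * (E (yb j * (m * xb i)) * yb i) := by
            refine Finset.sum_congr rfl fun i _ => ?_
            rw [Finset.sum_mul, Finset.sum_mul, Finset.sum_mul]
            refine Finset.sum_congr rfl fun j _ => ?_
            have hnN : E (yb j * (m * xb i)) ∈ N :=
              hE_mem _ (M.mul_mem (hyb j) (M.mul_mem hmM (hxb i)))
            have h1 : E (yb j * (m * xb i)) * u = u * E (yb j * (m * xb i)) :=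
              (huN _ hnN).symm
            have h2 : E (yb j * (m * xb i)) * e1 = e1 * E (yb j * (m * xb i)) :=
              (he1_N _ hnN).symm
            calc xb j * E (yb j * (m * xb i)) * u * e1 * yb i
                = xb j * (E (yb j * (m * xb i)) * u) * e1 * yb i := by noncomm_ring
              _ = xb j * (u * E (yb j * (m * xb i))) * e1 * yb i := by rw [h1]
              _ = xb j * u * (E (yb j * (m * xb i)) * e1) * yb i := by noncomm_ring
              _ = xb j * u * (e1 * E (yb j * (m * xb i))) * yb i := by rw [h2]
              _ = xb j * u * e1 * (E (yb j * (m * xb i)) * yb i) := by noncomm_ring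
        _ = ∑ j, ∑ i, xb j * u * e1 * (E ((yb j * m) * xb i) * yb i) := by
            rw [Finset.sum_comm]
            exact Finset.sum_congr rfl fun j _ => Finset.sum_congr rfl fun i _ => by
              rw [mul_assoc (yb j) m (xb i)]
        _ = ∑ j, xb j * u * e1 * (yb j * m) := by
            refine Finset.sum_congr rfl fun j _ => ?_
            rw [← Finset.mul_sum,
              hdual1 (yb j * m) (M.mul_mem (hyb j) hmM)]
        _ = (∑ j, xb j * u * e1 * yb j) * m := by
            rw [Finset.sum_mul]
            exact Finset.sum_congr rfl fun j _ => by noncomm_ring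
    exact key.symm
  -- The dual-basis identity on M₁ : ∑ᵢ EM(z xᵢ e₁) e₁ yᵢ = λ z for all z
  have hkey : ∀ z : R, ∑ i, EM (z * (xb i * e1)) * (e1 * yb i) = lam • z := by
    have hz' : ∀ z : R, z ∈ Submodule.span k
        {z : R | ∃ m ∈ M, ∃ m' ∈ M, z = m * e1 * m'} := by
      intro z; rw [← hM1_gen]; trivial
    intro z
    refine Submodule.span_induction
      (p := fun z _ => ∑ i, EM (z * (xb i * e1)) * (e1 * yb i) = lam • z)
      ?_ ?_ ?_ ?_ (hz' z)
    · rintro z ⟨m, hmM, m', hm'M, rfl⟩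
      have step : ∀ i, EM (m * e1 * m' * (xb i * e1)) * (e1 * yb i)
          = lam • (m * e1 * (E (m' * xb i) * yb i)) := by
        intro i
        have h1 : m * e1 * m' * (xb i * e1) = m * E (m' * xb i) * e1 * 1 := by
          have : e1 * (m' * xb i) * e1 = e1 * E (m' * xb i) :=
            he1_jones _ (M.mul_mem hm'M (hxb i))
          calc m * e1 * m' * (xb i * e1)
              = m * (e1 * (m' * xb i) * e1) := by noncomm_ring
            _ = m * (e1 * E (m' * xb i)) := by rw [this]
            _ = m * (E (m' * xb i) * e1) := by
                rw [he1_jones' _ (M.mul_mem hm'M (hxb i))]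
            _ = m * E (m' * xb i) * e1 * 1 := by noncomm_ring
        rw [h1, hEM_e1 (m * E (m' * xb i))
          (M.mul_mem hmM (hNM (hE_mem _ (M.mul_mem hm'M (hxb i))))) 1 M.one_mem,
          smul_mul_assoc]
        congr 1
        have h2 : e1 * E (m' * xb i) = E (m' * xb i) * e1 :=
          he1_jones' _ (M.mul_mem hm'M (hxb i))
        calc m * E (m' * xb i) * 1 * (e1 * yb i)
            = m * ((E (m' * xb i) * e1) * yb i) := by noncomm_ring
          _ = m * ((e1 * E (m' * xb i)) * yb i) := by rw [h2]
          _ = m * e1 * (E (m' * xb i) * yb i) := by noncomm_ring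
      rw [Finset.sum_congr rfl fun i _ => step i, ← Finset.smul_sum, ← Finset.mul_sum,
        hdual1 m' hm'M]
    · simp
    · intro x y _ _ hx hy
      have step : ∀ i : Fin nE, EM ((x + y) * (xb i * e1)) * (e1 * yb i)
          = EM (x * (xb i * e1)) * (e1 * yb i) + EM (y * (xb i * e1)) * (e1 * yb i) := by
        intro i; rw [add_mul, map_add, add_mul]
      rw [Finset.sum_congr rfl fun i _ => step i, Finset.sum_add_distrib, hx, hy, smul_add]
    · intro a x _ hx
      calc ∑ i, EM (a • x * (xb i * e1)) * (e1 * yb i)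
          = a • ∑ i, EM (x * (xb i * e1)) * (e1 * yb i) := by
            rw [Finset.smul_sum]
            exact Finset.sum_congr rfl fun i _ => by
              rw [smul_mul_assoc, map_smul, smul_mul_assoc]
        _ = lam • (a • x) := by rw [hx, smul_comm]
  refine ⟨fun u huM _ => part1 u huM, fun v _ v' _ => hT_tr v v', ?_⟩
  -- Part 3 : non-degeneracy on V
  intro v hv hperp
  set w : R := EM (v * e1) with hw
  have hwM : w ∈ M := hEM_mem _
  have hwN : ∀ y ∈ N, w * y = y * w := by
    intro y hy
    calc w * y = EM (v * e1 * y) := by rw [hw, hEM_right y (hNM hy)]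
      _ = EM (y * (v * e1)) := by
          rw [mul_assoc, he1_N y hy, ← mul_assoc, hv y (hNM hy), mul_assoc]
      _ = y * w := by rw [hEM_left y (hNM hy)]
  -- T(v * φ(u)) = λ⁻¹ T(u w) for u ∈ M
  have hpair : ∀ u ∈ M, T (v * ∑ i, xb i * u * e1 * yb i) = lam⁻¹ * T (u * w) := by
    intro u huM
    have h1 : ∀ i, T (v * (xb i * u * e1 * yb i)) = T (u * w * yb i * xb i) := by
      intro i
      have hxuM : xb i * u ∈ M := M.mul_mem (hxb i) huM
      have e1' : v * (xb i * u * e1 * yb i) = xb i * u * (v * e1) * yb i := by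
        calc v * (xb i * u * e1 * yb i)
            = (v * (xb i * u)) * e1 * yb i := by noncomm_ring
          _ = ((xb i * u) * v) * e1 * yb i := by rw [hv _ hxuM]
          _ = xb i * u * (v * e1) * yb i := by noncomm_ring
      rw [e1', ← hTEM, hEM_right (yb i) (hyb i), hEM_left _ hxuM, ← hw]
      rw [show xb i * u * w * yb i = xb i * (u * w * yb i) by noncomm_ring, hT_tr]
    rw [Finset.mul_sum, map_sum]
    simp only [h1]
    rw [← map_sum]
    have h2 : ∑ i, u * w * yb i * xb i = lam⁻¹ • (u * w) := by
      calc ∑ i, u * w * yb i * xb i = u * w * ∑ i, yb i * xb i := by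
            rw [Finset.mul_sum]
            exact Finset.sum_congr rfl fun i _ => by noncomm_ring
        _ = lam⁻¹ • (u * w) := by rw [hindex', mul_smul_comm, mul_one]
    rw [h2, map_smul, smul_eq_mul]
  have hw0 : w = 0 := by
    refine hU_nondeg w hwM hwN fun u' hu'M hu'N => ?_
    have h3 : T (v * ∑ i, xb i * u' * e1 * yb i) = 0 :=
      hperp _ (hphiV u' hu'M hu'N)
    have h4 := hpair u' hu'M
    rw [h3] at h4
    have h5 : T (u' * w) = 0 := by
      rcases mul_eq_zero.mp h4.symm with h | h
      · exact absurd h (inv_ne_zero hlam)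
      · exact h
    rw [hT_tr]; exact h5
  -- conclude v = 0 from the dual-basis identity
  have h6 : lam • v = 0 := by
    rw [← hkey v]
    refine Finset.sum_eq_zero fun i _ => ?_
    have : v * (xb i * e1) = xb i * (v * e1) := by
      rw [← mul_assoc, hv _ (hxb i), mul_assoc]
    rw [this, hEM_left _ (hxb i), ← hw, hw0, mul_zero, zero_mul]
  rcases smul_eq_zero.mp h6 with h | h
  · exact absurd h hlam
  · exact h
end

section
/- A and B are separable k-algebras, and the restrictions T|_A and T|_B are non-degenerate traces on A and B respectively. Moreover, A is a strongly separable extension of U with conditional expectation E_M|_A, dual bases {z_j}, {w_j}, and index λ⁻¹, and B is a strongly separable extension of V with conditional expectation E_{M₁}|_B, dual bases {u_i}, {v_i}, and index λ⁻¹. -/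
open scoped TensorProduct
open TensorProduct

/-- A symmetric Markov extension `N ⊆ M` of `k`-algebras satisfying the symmetric
product and weak irreducibility assumptions, together with its Jones tower
`N ⊆ M ⊆ M₁ ⊆ M₂` (the ambient algebra `R` plays the role of `M₂`), the
normalized trace `T = T₂` and the depth two conditions. -/
structure D2 (k : Type*) [Field k] (R : Type*) [Ring R] [Algebra k R] where
  N : Subalgebra k R
  M : Subalgebra k R
  M1 : Subalgebra k R
  hNM : N ≤ M
  hMM1 : M ≤ M1
  E : R →ₗ[k] R
  EM : R →ₗ[k] R
  EM1 : R →ₗ[k] R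
  lam : k
  lam_ne : lam ≠ 0
  e1 : R
  e2 : R
  T : R →ₗ[k] k
  -- Markov extension data for E : M → N
  nE : ℕ
  xb : Fin nE → R
  yb : Fin nE → R
  hxb : ∀ i, xb i ∈ M
  hyb : ∀ i, yb i ∈ M
  hE_mem : ∀ x ∈ M, E x ∈ N
  hE_one : E 1 = 1
  hE_left : ∀ n ∈ N, ∀ x ∈ M, E (n * x) = n * E x
  hE_right : ∀ n ∈ N, ∀ x ∈ M, E (x * n) = E x * n
  hdual1 : ∀ m ∈ M, ∑ i, E (m * xb i) * yb i = m
  hdual2 : ∀ m ∈ M, ∑ i, xb i * E (yb i * m) = m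
  hindex : ∑ i, xb i * yb i = lam⁻¹ • (1 : R)
  hindex' : ∑ i, yb i * xb i = lam⁻¹ • (1 : R)
  -- the normalized trace (T₂ on M₂ = R; it restricts to T on N, T₀ on M, T₁ on M₁)
  hT_one : T 1 = 1
  hT_tr : ∀ x y : R, T (x * y) = T (y * x)
  hTE : ∀ x ∈ M, T (E x) = T x
  hTEM : ∀ x ∈ M1, T (EM x) = T x
  hTEM1 : ∀ x : R, T (EM1 x) = T x
  -- symmetry of the Markov extension: E u = u E for all u ∈ U = C_M(N)
  hsymm : ∀ u ∈ M, (∀ y ∈ N, u * y = y * u) → ∀ x ∈ M, E (u * x) = E (x * u)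
  -- the basic construction M₁ = M e₁ M
  he1_mem : e1 ∈ M1
  he1_idem : e1 * e1 = e1
  he1_N : ∀ y ∈ N, e1 * y = y * e1
  hM1_gen : M1.toSubmodule = Submodule.span k {z : R | ∃ m ∈ M, ∃ m' ∈ M, z = m * e1 * m'}
  hEM_mem : ∀ x ∈ M1, EM x ∈ M
  hEM_one : EM 1 = 1
  hEM_left : ∀ m ∈ M, ∀ x ∈ M1, EM (m * x) = m * EM x
  hEM_right : ∀ m ∈ M, ∀ x ∈ M1, EM (x * m) = EM x * m
  hEM_e1 : ∀ m ∈ M, ∀ m' ∈ M, EM (m * e1 * m') = lam • (m * m')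
  he1_jones : ∀ x ∈ M, e1 * x * e1 = e1 * E x
  he1_jones' : ∀ x ∈ M, e1 * E x = E x * e1
  -- the iterated basic construction M₂ = M₁ e₂ M₁ (M₂ = R is the ambient algebra)
  he2_idem : e2 * e2 = e2
  he2_M : ∀ m ∈ M, e2 * m = m * e2
  hM2_gen : (⊤ : Submodule k R) = Submodule.span k {z : R | ∃ x ∈ M1, ∃ y ∈ M1, z = x * e2 * y}
  hEM1_mem : ∀ x : R, EM1 x ∈ M1
  hEM1_one : EM1 1 = 1
  hEM1_left : ∀ m ∈ M1, ∀ x : R, EM1 (m * x) = m * EM1 x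
  hEM1_right : ∀ m ∈ M1, ∀ x : R, EM1 (x * m) = EM1 x * m
  hEM1_e2 : ∀ x ∈ M1, ∀ y ∈ M1, EM1 (x * e2 * y) = lam • (x * y)
  he2_jones : ∀ x ∈ M1, e2 * x * e2 = e2 * EM x
  he2_jones' : ∀ x ∈ M1, e2 * EM x = EM x * e2
  -- braid-like relations and Pimsner-Popa relations
  hbraid1 : e1 * e2 * e1 = lam • e1
  hbraid2 : e2 * e1 * e2 = lam • e2
  hPP1 : ∀ x ∈ M1, x * e1 = lam⁻¹ • (EM (x * e1) * e1)
  hPP1' : ∀ x ∈ M1, e1 * x = lam⁻¹ • (e1 * EM (e1 * x))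
  hPP2 : ∀ x : R, x * e2 = lam⁻¹ • (EM1 (x * e2) * e2)
  hPP2' : ∀ x : R, e2 * x = lam⁻¹ • (e2 * EM1 (e2 * x))
  -- weak irreducibility: U = C_M(N) is Kanzaki separable with symmetric
  -- separability element ∑ sp i ⊗ sq i, and T₀ = T|U is non-degenerate on U
  nS : ℕ
  sp : Fin nS → R
  sq : Fin nS → R
  hsp : ∀ i, sp i ∈ M ∧ ∀ y ∈ N, sp i * y = y * sp i
  hsq : ∀ i, sq i ∈ M ∧ ∀ y ∈ N, sq i * y = y * sq i
  hsep_one : ∑ i, sp i * sq i = 1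
  hsep_cas : ∀ u ∈ M, (∀ y ∈ N, u * y = y * u) →
      ∑ i, (u * sp i) ⊗ₜ[k] sq i = ∑ i, sp i ⊗ₜ[k] (sq i * u)
  hsep_symm : ∑ i, sp i ⊗ₜ[k] sq i = ∑ i, sq i ⊗ₜ[k] sp i
  hU_nondeg : ∀ u ∈ M, (∀ y ∈ N, u * y = y * u) →
      (∀ u' ∈ M, (∀ y ∈ N, u' * y = y * u') → T (u * u') = 0) → u = 0
  -- depth two conditions
  nA : ℕ
  zb : Fin nA → R
  wb : Fin nA → R
  hzb : ∀ j, zb j ∈ M1 ∧ ∀ y ∈ N, zb j * y = y * zb j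
  hwb : ∀ j, wb j ∈ M1 ∧ ∀ y ∈ N, wb j * y = y * wb j
  hdualA1 : ∀ x ∈ M1, ∑ j, EM (x * zb j) * wb j = x
  hdualA2 : ∀ x ∈ M1, ∑ j, zb j * EM (wb j * x) = x
  nB : ℕ
  ub : Fin nB → R
  vb : Fin nB → R
  hub : ∀ i, ∀ y ∈ M, ub i * y = y * ub i
  hvb : ∀ i, ∀ y ∈ M, vb i * y = y * vb i
  hdualB1 : ∀ x : R, ∑ i, EM1 (x * ub i) * vb i = x
  hdualB2 : ∀ x : R, ∑ i, ub i * EM1 (vb i * x) = x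

namespace D2

variable {k : Type*} [Field k] {R : Type*} [Ring R] [Algebra k R]

/-- `U = C_M(N)`. -/
def U (D : D2 k R) : Subalgebra k R := D.M ⊓ Subalgebra.centralizer k (D.N : Set R)

/-- `V = C_{M₁}(M)`. -/
def V (D : D2 k R) : Subalgebra k R := D.M1 ⊓ Subalgebra.centralizer k (D.M : Set R)

/-- `W = C_{M₂}(M₁)`. -/
def W (D : D2 k R) : Subalgebra k R := Subalgebra.centralizer k (D.M1 : Set R)

/-- `A = C_{M₁}(N)`. -/
def A (D : D2 k R) : Subalgebra k R := D.M1 ⊓ Subalgebra.centralizer k (D.N : Set R)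

/-- `B = C_{M₂}(M)`. -/
def B (D : D2 k R) : Subalgebra k R := Subalgebra.centralizer k (D.M : Set R)

/-- `C = C_{M₂}(N)`. -/
def C (D : D2 k R) : Subalgebra k R := Subalgebra.centralizer k (D.N : Set R)

end D2

open D2

section Aux

variable {k : Type*} [Field k] {R : Type*} [Ring R] [Algebra k R] (D : D2 k R)

lemma he1E (x : R) (hx : x ∈ D.M) (r : R) :
    D.e1 * (x * (D.e1 * r)) = D.E x * (D.e1 * r) := by
  calc D.e1 * (x * (D.e1 * r)) = (D.e1 * x * D.e1) * r := by
        simp only [mul_assoc]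
    _ = (D.E x * D.e1) * r := by rw [D.he1_jones x hx, D.he1_jones' x hx]
    _ = D.E x * (D.e1 * r) := by rw [mul_assoc]

lemma sum_xe1y : ∑ i, D.xb i * (D.e1 * D.yb i) = (1 : R) := by
  set S := ∑ i, D.xb i * (D.e1 * D.yb i) with hS
  have key : ∀ z ∈ Submodule.span k {z : R | ∃ m ∈ D.M, ∃ m' ∈ D.M, z = m * D.e1 * m'},
      S * z = z := by
    intro z hz
    induction hz using Submodule.span_induction with
    | mem x hx =>
      obtain ⟨m, hm, m', hm', rfl⟩ := hx
      rw [hS, Finset.sum_mul]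
      have h1 : ∀ i, (D.xb i * (D.e1 * D.yb i)) * (m * D.e1 * m')
          = (D.xb i * D.E (D.yb i * m)) * (D.e1 * m') := by
        intro i
        calc (D.xb i * (D.e1 * D.yb i)) * (m * D.e1 * m')
            = D.xb i * (D.e1 * ((D.yb i * m) * (D.e1 * m'))) := by
              simp only [mul_assoc]
          _ = D.xb i * (D.E (D.yb i * m) * (D.e1 * m')) := by
              rw [he1E D _ (D.M.mul_mem (D.hyb i) hm)]
          _ = (D.xb i * D.E (D.yb i * m)) * (D.e1 * m') := by rw [mul_assoc]
      rw [Finset.sum_congr rfl (fun i _ => h1 i), ← Finset.sum_mul,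
        D.hdual2 m hm, ← mul_assoc]
    | zero => rw [mul_zero]
    | add x y _ _ hx hy => rw [mul_add, hx, hy]
    | smul a x _ hx => rw [mul_smul_comm, hx]
  have h1m : (1 : R) ∈ Submodule.span k {z : R | ∃ m ∈ D.M, ∃ m' ∈ D.M, z = m * D.e1 * m'} := by
    rw [← D.hM1_gen]; exact D.M1.one_mem
  have := key 1 h1m
  rwa [mul_one] at this

lemma altdual1 (x : R) (hx : x ∈ D.M1) :
    ∑ i, D.EM (x * (D.lam⁻¹ • (D.xb i * D.e1))) * (D.e1 * D.yb i) = x := by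
  have hterm : ∀ i, D.EM (x * (D.lam⁻¹ • (D.xb i * D.e1))) * (D.e1 * D.yb i)
      = x * (D.xb i * (D.e1 * D.yb i)) := by
    intro i
    have hxm : x * D.xb i ∈ D.M1 := D.M1.mul_mem hx (D.hMM1 (D.hxb i))
    have h2 : D.lam • (x * D.xb i * D.e1) = D.EM (x * D.xb i * D.e1) * D.e1 := by
      conv_lhs => rw [D.hPP1 _ hxm]
      rw [smul_smul, mul_inv_cancel₀ D.lam_ne, one_smul]
    calc D.EM (x * (D.lam⁻¹ • (D.xb i * D.e1))) * (D.e1 * D.yb i)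
        = (D.lam⁻¹ • D.EM (x * D.xb i * D.e1)) * (D.e1 * D.yb i) := by
          rw [mul_smul_comm, map_smul, ← mul_assoc x (D.xb i) D.e1]
      _ = D.lam⁻¹ • (D.EM (x * D.xb i * D.e1) * D.e1 * D.yb i) := by
          rw [smul_mul_assoc, mul_assoc, ← mul_assoc]
      _ = D.lam⁻¹ • ((D.lam • (x * D.xb i * D.e1)) * D.yb i) := by rw [← h2]
      _ = x * (D.xb i * (D.e1 * D.yb i)) := by
          rw [smul_mul_assoc, smul_smul, inv_mul_cancel₀ D.lam_ne, one_smul,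
            mul_assoc, mul_assoc]
  rw [Finset.sum_congr rfl (fun i _ => hterm i), ← Finset.mul_sum, sum_xe1y D, mul_one]

lemma indexA : ∑ j, D.zb j * D.wb j = D.lam⁻¹ • (1 : R) := by
  calc ∑ j, D.zb j * D.wb j
      = ∑ j, ∑ i, D.zb j * (D.EM (D.wb j * (D.lam⁻¹ • (D.xb i * D.e1))) * (D.e1 * D.yb i)) := by
        refine Finset.sum_congr rfl fun j _ => ?_
        conv_lhs => rw [← altdual1 D _ (D.hwb j).1]
        rw [Finset.mul_sum]
    _ = ∑ i, (∑ j, D.zb j * D.EM (D.wb j * (D.lam⁻¹ • (D.xb i * D.e1)))) * (D.e1 * D.yb i) := by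
        rw [Finset.sum_comm]
        refine Finset.sum_congr rfl fun i _ => ?_
        rw [Finset.sum_mul]
        exact Finset.sum_congr rfl fun j _ => (mul_assoc _ _ _).symm
    _ = ∑ i, (D.lam⁻¹ • (D.xb i * D.e1)) * (D.e1 * D.yb i) := by
        refine Finset.sum_congr rfl fun i _ => ?_
        rw [D.hdualA2 _ (D.M1.smul_mem (D.M1.mul_mem (D.hMM1 (D.hxb i)) D.he1_mem) _)]
    _ = D.lam⁻¹ • (1 : R) := by
        have h : ∀ i, (D.lam⁻¹ • (D.xb i * D.e1)) * (D.e1 * D.yb i)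
            = D.lam⁻¹ • (D.xb i * (D.e1 * D.yb i)) := by
          intro i
          rw [smul_mul_assoc]
          congr 1
          rw [mul_assoc, ← mul_assoc D.e1 D.e1, D.he1_idem]
        rw [Finset.sum_congr rfl (fun i _ => h i), ← Finset.smul_sum, sum_xe1y D]

lemma he2E (x : R) (hx : x ∈ D.M1) (r : R) :
    D.e2 * (x * (D.e2 * r)) = D.EM x * (D.e2 * r) := by
  calc D.e2 * (x * (D.e2 * r)) = (D.e2 * x * D.e2) * r := by
        simp only [mul_assoc]
    _ = (D.EM x * D.e2) * r := by rw [D.he2_jones x hx, D.he2_jones' x hx]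
    _ = D.EM x * (D.e2 * r) := by rw [mul_assoc]

lemma sum_ze2w : ∑ j, D.zb j * (D.e2 * D.wb j) = (1 : R) := by
  set S := ∑ j, D.zb j * (D.e2 * D.wb j) with hS
  have key : ∀ z ∈ Submodule.span k {z : R | ∃ x ∈ D.M1, ∃ y ∈ D.M1, z = x * D.e2 * y},
      S * z = z := by
    intro z hz
    induction hz using Submodule.span_induction with
    | mem w hw =>
      obtain ⟨x, hx, y, hy, rfl⟩ := hw
      rw [hS, Finset.sum_mul]
      have h1 : ∀ j, (D.zb j * (D.e2 * D.wb j)) * (x * D.e2 * y)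
          = (D.zb j * D.EM (D.wb j * x)) * (D.e2 * y) := by
        intro j
        calc (D.zb j * (D.e2 * D.wb j)) * (x * D.e2 * y)
            = D.zb j * (D.e2 * ((D.wb j * x) * (D.e2 * y))) := by
              simp only [mul_assoc]
          _ = D.zb j * (D.EM (D.wb j * x) * (D.e2 * y)) := by
              rw [he2E D _ (D.M1.mul_mem (D.hwb j).1 hx)]
          _ = (D.zb j * D.EM (D.wb j * x)) * (D.e2 * y) := by rw [mul_assoc]
      rw [Finset.sum_congr rfl (fun j _ => h1 j), ← Finset.sum_mul,
        D.hdualA2 x hx, ← mul_assoc]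
    | zero => rw [mul_zero]
    | add x y _ _ hx hy => rw [mul_add, hx, hy]
    | smul a x _ hx => rw [mul_smul_comm, hx]
  have h1m : (1 : R) ∈ Submodule.span k {z : R | ∃ x ∈ D.M1, ∃ y ∈ D.M1, z = x * D.e2 * y} := by
    rw [← D.hM2_gen]; trivial
  have := key 1 h1m
  rwa [mul_one] at this

lemma altdualB1 (x : R) :
    ∑ j, D.EM1 (x * (D.lam⁻¹ • (D.zb j * D.e2))) * (D.e2 * D.wb j) = x := by
  have hterm : ∀ j, D.EM1 (x * (D.lam⁻¹ • (D.zb j * D.e2))) * (D.e2 * D.wb j)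
      = x * (D.zb j * (D.e2 * D.wb j)) := by
    intro j
    have h2 : D.lam • (x * D.zb j * D.e2) = D.EM1 (x * D.zb j * D.e2) * D.e2 := by
      conv_lhs => rw [D.hPP2 (x * D.zb j)]
      rw [smul_smul, mul_inv_cancel₀ D.lam_ne, one_smul]
    calc D.EM1 (x * (D.lam⁻¹ • (D.zb j * D.e2))) * (D.e2 * D.wb j)
        = (D.lam⁻¹ • D.EM1 (x * D.zb j * D.e2)) * (D.e2 * D.wb j) := by
          rw [mul_smul_comm, map_smul, ← mul_assoc x (D.zb j) D.e2]
      _ = D.lam⁻¹ • (D.EM1 (x * D.zb j * D.e2) * D.e2 * D.wb j) := by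
          rw [smul_mul_assoc, mul_assoc, ← mul_assoc]
      _ = D.lam⁻¹ • ((D.lam • (x * D.zb j * D.e2)) * D.wb j) := by rw [← h2]
      _ = x * (D.zb j * (D.e2 * D.wb j)) := by
          rw [smul_mul_assoc, smul_smul, inv_mul_cancel₀ D.lam_ne, one_smul,
            mul_assoc, mul_assoc]
  rw [Finset.sum_congr rfl (fun j _ => hterm j), ← Finset.mul_sum, sum_ze2w D, mul_one]

lemma indexB : ∑ i, D.ub i * D.vb i = D.lam⁻¹ • (1 : R) := by
  calc ∑ i, D.ub i * D.vb i
      = ∑ i, ∑ j, D.ub i * (D.EM1 (D.vb i * (D.lam⁻¹ • (D.zb j * D.e2))) * (D.e2 * D.wb j)) := by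
        refine Finset.sum_congr rfl fun i _ => ?_
        conv_lhs => rw [← altdualB1 D (D.vb i)]
        rw [Finset.mul_sum]
    _ = ∑ j, (∑ i, D.ub i * D.EM1 (D.vb i * (D.lam⁻¹ • (D.zb j * D.e2)))) * (D.e2 * D.wb j) := by
        rw [Finset.sum_comm]
        refine Finset.sum_congr rfl fun j _ => ?_
        rw [Finset.sum_mul]
        exact Finset.sum_congr rfl fun i _ => (mul_assoc _ _ _).symm
    _ = ∑ j, (D.lam⁻¹ • (D.zb j * D.e2)) * (D.e2 * D.wb j) := by
        refine Finset.sum_congr rfl fun j _ => ?_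
        rw [D.hdualB2]
    _ = D.lam⁻¹ • (1 : R) := by
        have h : ∀ j, (D.lam⁻¹ • (D.zb j * D.e2)) * (D.e2 * D.wb j)
            = D.lam⁻¹ • (D.zb j * (D.e2 * D.wb j)) := by
          intro j
          rw [smul_mul_assoc]
          congr 1
          rw [mul_assoc, ← mul_assoc D.e2 D.e2, D.he2_idem]
        rw [Finset.sum_congr rfl (fun j _ => h j), ← Finset.smul_sum, sum_ze2w D]

/-- The anti-isomorphism `U → V`, `u ↦ ∑ᵢ xᵢ u e₁ yᵢ`, as a linear map on `R`. -/
noncomputable def phi : R →ₗ[k] R where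
  toFun u := ∑ i, D.xb i * (u * (D.e1 * D.yb i))
  map_add' u v := by simp [add_mul, mul_add, Finset.sum_add_distrib]
  map_smul' c u := by simp [Finset.smul_sum, smul_mul_assoc, mul_smul_comm]

lemma phi_apply (u : R) : phi D u = ∑ i, D.xb i * (u * (D.e1 * D.yb i)) := rfl

lemma phi_one : phi D 1 = 1 := by
  rw [phi_apply]
  simp only [one_mul]
  exact sum_xe1y D

lemma phi_mem_M1 {u : R} (hu : u ∈ D.M) : phi D u ∈ D.M1 := by
  rw [phi_apply]
  exact Subalgebra.sum_mem _ fun i _ => D.M1.mul_mem (D.hMM1 (D.hxb i))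
    (D.M1.mul_mem (D.hMM1 hu) (D.M1.mul_mem D.he1_mem (D.hMM1 (D.hyb i))))

lemma phi_comm_M {u : R} (hu : u ∈ D.M) (hcm : ∀ y ∈ D.N, u * y = y * u)
    {m : R} (hm : m ∈ D.M) : m * phi D u = phi D u * m := by
  have step : ∀ i l, (D.xb l * D.E (D.yb l * (m * D.xb i))) * (u * (D.e1 * D.yb i))
      = D.xb l * (u * (D.e1 * (D.E ((D.yb l * m) * D.xb i) * D.yb i))) := by
    intro i l
    have hn : D.yb l * (m * D.xb i) ∈ D.M :=
      D.M.mul_mem (D.hyb l) (D.M.mul_mem hm (D.hxb i))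
    have hEn : D.E (D.yb l * (m * D.xb i)) ∈ D.N := D.hE_mem _ hn
    calc (D.xb l * D.E (D.yb l * (m * D.xb i))) * (u * (D.e1 * D.yb i))
        = D.xb l * ((D.E (D.yb l * (m * D.xb i)) * u) * (D.e1 * D.yb i)) := by
          simp only [mul_assoc]
      _ = D.xb l * ((u * D.E (D.yb l * (m * D.xb i))) * (D.e1 * D.yb i)) := by
          rw [← hcm _ hEn]
      _ = D.xb l * (u * ((D.E (D.yb l * (m * D.xb i)) * D.e1) * D.yb i)) := by
          simp only [mul_assoc]
      _ = D.xb l * (u * ((D.e1 * D.E (D.yb l * (m * D.xb i))) * D.yb i)) := by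
          rw [← D.he1_jones' _ hn]
      _ = D.xb l * (u * (D.e1 * (D.E ((D.yb l * m) * D.xb i) * D.yb i))) := by
          rw [mul_assoc D.e1, mul_assoc (D.yb l)]
  calc m * phi D u
      = ∑ i, (m * D.xb i) * (u * (D.e1 * D.yb i)) := by
        rw [phi_apply, Finset.mul_sum]
        exact Finset.sum_congr rfl fun i _ => (mul_assoc _ _ _).symm
    _ = ∑ i, ∑ l, (D.xb l * D.E (D.yb l * (m * D.xb i))) * (u * (D.e1 * D.yb i)) := by
        refine Finset.sum_congr rfl fun i _ => ?_
        conv_lhs => rw [← D.hdual2 (m * D.xb i) (D.M.mul_mem hm (D.hxb i))]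
        rw [Finset.sum_mul]
    _ = ∑ l, ∑ i, D.xb l * (u * (D.e1 * (D.E ((D.yb l * m) * D.xb i) * D.yb i))) := by
        rw [Finset.sum_comm]
        exact Finset.sum_congr rfl fun l _ => Finset.sum_congr rfl fun i _ => step i l
    _ = ∑ l, D.xb l * (u * (D.e1 * (D.yb l * m))) := by
        refine Finset.sum_congr rfl fun l _ => ?_
        simp only [← Finset.mul_sum]
        rw [D.hdual1 (D.yb l * m) (D.M.mul_mem (D.hyb l) hm)]
    _ = phi D u * m := by
        rw [phi_apply, Finset.sum_mul]
        refine Finset.sum_congr rfl fun l _ => ?_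
        simp only [mul_assoc]

lemma phi_antimul {u u' : R} (hcm : ∀ y ∈ D.N, u * y = y * u) (hu' : u' ∈ D.M) :
    phi D u * phi D u' = phi D (u' * u) := by
  have step : ∀ i l, (D.xb i * (u * (D.e1 * D.yb i))) * (D.xb l * (u' * (D.e1 * D.yb l)))
      = (D.xb i * D.E (D.yb i * (D.xb l * u'))) * (u * (D.e1 * D.yb l)) := by
    intro i l
    have hc : D.yb i * (D.xb l * u') ∈ D.M :=
      D.M.mul_mem (D.hyb i) (D.M.mul_mem (D.hxb l) hu')
    have hEc : D.E (D.yb i * (D.xb l * u')) ∈ D.N := D.hE_mem _ hc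
    calc (D.xb i * (u * (D.e1 * D.yb i))) * (D.xb l * (u' * (D.e1 * D.yb l)))
        = D.xb i * (u * (D.e1 * ((D.yb i * (D.xb l * u')) * (D.e1 * D.yb l)))) := by
          simp only [mul_assoc]
      _ = D.xb i * (u * (D.E (D.yb i * (D.xb l * u')) * (D.e1 * D.yb l))) := by
          rw [he1E D _ hc]
      _ = D.xb i * ((u * D.E (D.yb i * (D.xb l * u'))) * (D.e1 * D.yb l)) := by
          rw [mul_assoc]
      _ = D.xb i * ((D.E (D.yb i * (D.xb l * u')) * u) * (D.e1 * D.yb l)) := by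
          rw [hcm _ hEc]
      _ = (D.xb i * D.E (D.yb i * (D.xb l * u'))) * (u * (D.e1 * D.yb l)) := by
          simp only [mul_assoc]
  calc phi D u * phi D u'
      = ∑ i, ∑ l, (D.xb i * (u * (D.e1 * D.yb i))) * (D.xb l * (u' * (D.e1 * D.yb l))) := by
        rw [phi_apply, phi_apply, Finset.sum_mul]
        exact Finset.sum_congr rfl fun i _ => Finset.mul_sum _ _ _
    _ = ∑ l, (∑ i, D.xb i * D.E (D.yb i * (D.xb l * u'))) * (u * (D.e1 * D.yb l)) := by
        rw [Finset.sum_comm]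
        refine Finset.sum_congr rfl fun l _ => ?_
        rw [Finset.sum_mul]
        exact Finset.sum_congr rfl fun i _ => step i l
    _ = ∑ l, (D.xb l * u') * (u * (D.e1 * D.yb l)) := by
        refine Finset.sum_congr rfl fun l _ => ?_
        rw [D.hdual2 _ (D.M.mul_mem (D.hxb l) hu')]
    _ = phi D (u' * u) := by
        rw [phi_apply]
        exact Finset.sum_congr rfl fun l _ => by simp only [mul_assoc]

/-- The inverse map `V → U`, `v ↦ λ⁻¹ E_M(v e₁)`. -/
noncomputable def psi (v : R) : R := D.lam⁻¹ • D.EM (v * D.e1)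

lemma psi_mem_M {v : R} (hv1 : v ∈ D.M1) : psi D v ∈ D.M :=
  D.M.smul_mem (D.hEM_mem _ (D.M1.mul_mem hv1 D.he1_mem)) _

lemma psi_comm_N {v : R} (hv1 : v ∈ D.M1) (hvm : ∀ m ∈ D.M, m * v = v * m) :
    ∀ y ∈ D.N, psi D v * y = y * psi D v := by
  intro y hy
  have hyM : y ∈ D.M := D.hNM hy
  have h1 : v * D.e1 * y = y * (v * D.e1) := by
    calc v * D.e1 * y = v * (D.e1 * y) := by rw [mul_assoc]
      _ = v * (y * D.e1) := by rw [D.he1_N y hy]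
      _ = (v * y) * D.e1 := by rw [mul_assoc]
      _ = (y * v) * D.e1 := by rw [← hvm y hyM]
      _ = y * (v * D.e1) := by rw [mul_assoc]
  rw [psi, smul_mul_assoc, mul_smul_comm]
  congr 1
  rw [← D.hEM_right y hyM _ (D.M1.mul_mem hv1 D.he1_mem), h1,
    D.hEM_left y hyM _ (D.M1.mul_mem hv1 D.he1_mem)]

lemma phi_psi {v : R} (hv1 : v ∈ D.M1) (hvm : ∀ m ∈ D.M, m * v = v * m) :
    phi D (psi D v) = v := by
  have h2 : D.lam • (v * D.e1) = D.EM (v * D.e1) * D.e1 := by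
    conv_lhs => rw [D.hPP1 v hv1]
    rw [smul_smul, mul_inv_cancel₀ D.lam_ne, one_smul]
  have hterm : ∀ i, D.xb i * (psi D v * (D.e1 * D.yb i)) = v * (D.xb i * (D.e1 * D.yb i)) := by
    intro i
    calc D.xb i * (psi D v * (D.e1 * D.yb i))
        = D.lam⁻¹ • (D.xb i * ((D.EM (v * D.e1) * D.e1) * D.yb i)) := by
          rw [psi, smul_mul_assoc, mul_smul_comm, mul_assoc]
      _ = D.lam⁻¹ • (D.xb i * ((D.lam • (v * D.e1)) * D.yb i)) := by rw [← h2]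
      _ = D.xb i * (v * (D.e1 * D.yb i)) := by
          rw [smul_mul_assoc, mul_smul_comm, smul_smul, inv_mul_cancel₀ D.lam_ne,
            one_smul, mul_assoc]
      _ = (D.xb i * v) * (D.e1 * D.yb i) := by rw [mul_assoc]
      _ = (v * D.xb i) * (D.e1 * D.yb i) := by rw [hvm _ (D.hxb i)]
      _ = v * (D.xb i * (D.e1 * D.yb i)) := by rw [mul_assoc]
  rw [phi_apply, Finset.sum_congr rfl (fun i _ => hterm i), ← Finset.mul_sum,
    sum_xe1y D, mul_one]

lemma T_phi {u : R} (hu : u ∈ D.M) : D.T (phi D u) = D.T u := by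
  have h1 : ∀ i, D.T (D.xb i * (u * (D.e1 * D.yb i)))
      = D.lam • D.T ((D.yb i * D.xb i) * u) := by
    intro i
    have he : D.xb i * (u * (D.e1 * D.yb i)) = (D.xb i * u) * D.e1 * D.yb i := by
      simp only [mul_assoc]
    have hmem : (D.xb i * u) * D.e1 * D.yb i ∈ D.M1 :=
      D.M1.mul_mem (D.M1.mul_mem (D.hMM1 (D.M.mul_mem (D.hxb i) hu)) D.he1_mem)
        (D.hMM1 (D.hyb i))
    rw [he, ← D.hTEM _ hmem, D.hEM_e1 _ (D.M.mul_mem (D.hxb i) hu) _ (D.hyb i),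
      map_smul]
    have : D.T ((D.xb i * u) * D.yb i) = D.T ((D.yb i * D.xb i) * u) := by
      rw [D.hT_tr (D.xb i * u) (D.yb i), ← mul_assoc]
    rw [smul_eq_mul, smul_eq_mul, this]
  rw [phi_apply, map_sum, Finset.sum_congr rfl (fun i _ => h1 i), ← Finset.smul_sum,
    ← map_sum, ← Finset.sum_mul, D.hindex', smul_mul_assoc, one_mul, map_smul,
    smul_eq_mul, smul_eq_mul, ← mul_assoc, mul_inv_cancel₀ D.lam_ne, one_mul]

lemma comm_mul {S : Set R} {a b : R} (ha : ∀ y ∈ S, a * y = y * a)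
    (hb : ∀ y ∈ S, b * y = y * b) : ∀ y ∈ S, (a * b) * y = y * (a * b) := by
  intro y hy
  rw [mul_assoc, hb y hy, ← mul_assoc, ha y hy, mul_assoc]

lemma EM_comm_N {x : R} (hx1 : x ∈ D.M1) (hxc : ∀ y ∈ D.N, x * y = y * x) :
    ∀ y ∈ D.N, D.EM x * y = y * D.EM x := by
  intro y hy
  rw [← D.hEM_right y (D.hNM hy) x hx1, hxc y hy, D.hEM_left y (D.hNM hy) x hx1]

lemma EM1_comm_M {x : R} (hxc : ∀ m ∈ D.M, x * m = m * x) :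
    ∀ m ∈ D.M, D.EM1 x * m = m * D.EM1 x := by
  intro m hm
  rw [← D.hEM1_right m (D.hMM1 hm) x, hxc m hm, D.hEM1_left m (D.hMM1 hm) x]

lemma cas_core {n1 n2 : ℕ} (z w : Fin n1 → R) (s t : Fin n2 → R) (E' : R →ₗ[k] R) (a : R)
    (hexp : ∀ j, a * z j = ∑ l, z l * E' (w l * (a * z j)))
    (hcol : ∀ l, ∑ j, E' (w l * (a * z j)) * w j = w l * a)
    (hcas : ∀ l j, ∑ i, (E' (w l * (a * z j)) * s i) ⊗ₜ[k] t i
        = ∑ i, s i ⊗ₜ[k] (t i * E' (w l * (a * z j)))) :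
    ∑ j, ∑ i, (a * (z j * s i)) ⊗ₜ[k] (t i * w j)
      = ∑ j, ∑ i, (z j * s i) ⊗ₜ[k] (t i * (w j * a)) := by
  have step1 : ∀ j, ∑ i, (a * (z j * s i)) ⊗ₜ[k] (t i * w j)
      = ∑ l, ∑ i, (z l * (E' (w l * (a * z j)) * s i)) ⊗ₜ[k] (t i * w j) := by
    intro j
    rw [Finset.sum_comm]
    refine Finset.sum_congr rfl fun i _ => ?_
    conv_lhs => rw [← mul_assoc, hexp j]
    rw [Finset.sum_mul, TensorProduct.sum_tmul]
    exact Finset.sum_congr rfl fun l _ => by rw [mul_assoc]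
  have step2 : ∀ j l, ∑ i, (z l * (E' (w l * (a * z j)) * s i)) ⊗ₜ[k] (t i * w j)
      = ∑ i, (z l * s i) ⊗ₜ[k] ((t i * E' (w l * (a * z j))) * w j) := by
    intro j l
    have h := congrArg
      (TensorProduct.map (LinearMap.mulLeft k (z l)) (LinearMap.mulRight k (w j)))
      (hcas l j)
    simpa only [map_sum, TensorProduct.map_tmul, LinearMap.mulLeft_apply,
      LinearMap.mulRight_apply] using h
  calc ∑ j, ∑ i, (a * (z j * s i)) ⊗ₜ[k] (t i * w j)
      = ∑ j, ∑ l, ∑ i, (z l * s i) ⊗ₜ[k] ((t i * E' (w l * (a * z j))) * w j) := by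
        refine Finset.sum_congr rfl fun j _ => ?_
        rw [step1 j]
        exact Finset.sum_congr rfl fun l _ => step2 j l
    _ = ∑ j, ∑ i, (z j * s i) ⊗ₜ[k] (t i * (w j * a)) := by
        rw [Finset.sum_comm]
        refine Finset.sum_congr rfl fun l _ => ?_
        rw [Finset.sum_comm]
        refine Finset.sum_congr rfl fun i _ => ?_
        have h : ∀ j, (z l * s i) ⊗ₜ[k] ((t i * E' (w l * (a * z j))) * w j)
            = (z l * s i) ⊗ₜ[k] (t i * (E' (w l * (a * z j)) * w j)) := fun j => by
          rw [mul_assoc]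
        rw [Finset.sum_congr rfl fun j _ => h j, ← TensorProduct.tmul_sum,
          ← Finset.mul_sum, hcol l]

lemma casV {v : R} (hv1 : v ∈ D.M1) (hvm : ∀ m ∈ D.M, m * v = v * m) :
    ∑ i, (v * phi D (D.sq i)) ⊗ₜ[k] phi D (D.sp i)
      = ∑ i, phi D (D.sq i) ⊗ₜ[k] (phi D (D.sp i) * v) := by
  have huM : psi D v ∈ D.M := psi_mem_M D hv1
  have huN : ∀ y ∈ D.N, psi D v * y = y * psi D v := psi_comm_N D hv1 hvm
  have hveq : v = phi D (psi D v) := (phi_psi D hv1 hvm).symm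
  have hmain := congrArg (fun t => TensorProduct.map (phi D) (phi D)
      ((TensorProduct.comm k R R) t)) (D.hsep_cas (psi D v) huM huN)
  simp only [map_sum, TensorProduct.comm_tmul, TensorProduct.map_tmul] at hmain
  calc ∑ i, (v * phi D (D.sq i)) ⊗ₜ[k] phi D (D.sp i)
      = ∑ i, phi D (D.sq i * psi D v) ⊗ₜ[k] phi D (D.sp i) :=
        Finset.sum_congr rfl fun i _ => by
          conv_lhs => rw [hveq]
          rw [phi_antimul D huN (D.hsq i).1]
    _ = ∑ i, phi D (D.sq i) ⊗ₜ[k] phi D (psi D v * D.sp i) := hmain.symm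
    _ = ∑ i, phi D (D.sq i) ⊗ₜ[k] (phi D (D.sp i) * v) :=
        Finset.sum_congr rfl fun i _ => by
          conv_rhs => rw [hveq]
          rw [phi_antimul D (D.hsp i).2 huM]

lemma nondegA' {a : R} (ha1 : a ∈ D.M1) (hac : ∀ y ∈ D.N, a * y = y * a)
    (h : ∀ a' ∈ D.M1, (∀ y ∈ D.N, a' * y = y * a') → D.T (a * a') = 0) : a = 0 := by
  have hz : ∀ j, D.EM (a * D.zb j) = 0 := by
    intro j
    have hmem1 : a * D.zb j ∈ D.M1 := D.M1.mul_mem ha1 (D.hzb j).1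
    have hcomm : ∀ y ∈ D.N, (a * D.zb j) * y = y * (a * D.zb j) :=
      comm_mul hac (D.hzb j).2
    refine D.hU_nondeg _ (D.hEM_mem _ hmem1) (EM_comm_N D hmem1 hcomm) ?_
    intro u' hu' hu'c
    have heq : D.T (D.EM (a * D.zb j) * u') = D.T (a * (D.zb j * u')) := by
      rw [← D.hEM_right u' hu' _ hmem1, D.hTEM _ (D.M1.mul_mem hmem1 (D.hMM1 hu')),
        mul_assoc]
    rw [heq]
    exact h _ (D.M1.mul_mem (D.hzb j).1 (D.hMM1 hu')) (comm_mul (D.hzb j).2 hu'c)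
  calc a = ∑ j, D.EM (a * D.zb j) * D.wb j := (D.hdualA1 a ha1).symm
    _ = 0 := by simp [hz]

lemma nondegV' {v : R} (hv1 : v ∈ D.M1) (hvm : ∀ m ∈ D.M, m * v = v * m)
    (h : ∀ v' ∈ D.M1, (∀ m ∈ D.M, m * v' = v' * m) → D.T (v * v') = 0) : v = 0 := by
  have huM : psi D v ∈ D.M := psi_mem_M D hv1
  have huN : ∀ y ∈ D.N, psi D v * y = y * psi D v := psi_comm_N D hv1 hvm
  have hu0 : psi D v = 0 := by
    refine D.hU_nondeg _ huM huN ?_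
    intro u' hu' hu'c
    have h1 : D.T (psi D v * u') = D.T (phi D (psi D v * u')) :=
      (T_phi D (D.M.mul_mem huM hu')).symm
    rw [h1, ← phi_antimul D hu'c huM, D.hT_tr, phi_psi D hv1 hvm]
    exact h _ (phi_mem_M1 D hu') (fun m hm => phi_comm_M D hu' hu'c hm)
  rw [← phi_psi D hv1 hvm, hu0, map_zero]

lemma nondegB' {b : R} (hb : ∀ m ∈ D.M, b * m = m * b)
    (h : ∀ b' : R, (∀ m ∈ D.M, b' * m = m * b') → D.T (b * b') = 0) : b = 0 := by
  have hz : ∀ j, D.EM1 (b * D.ub j) = 0 := by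
    intro j
    have hbu : ∀ m ∈ D.M, (b * D.ub j) * m = m * (b * D.ub j) :=
      comm_mul hb (fun y hy => D.hub j y hy)
    refine nondegV' D (D.hEM1_mem _) (fun m hm => (EM1_comm_M D hbu m hm).symm) ?_
    intro v' hv'1 hv'm
    have heq : D.T (D.EM1 (b * D.ub j) * v') = D.T (b * (D.ub j * v')) := by
      rw [← D.hEM1_right v' hv'1, D.hTEM1, mul_assoc]
    rw [heq]
    refine h _ (comm_mul (fun y hy => D.hub j y hy) (fun m hm => (hv'm m hm).symm))
  calc b = ∑ j, D.EM1 (b * D.ub j) * D.vb j := (D.hdualB1 b).symm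
    _ = 0 := by simp [hz]

lemma casA' {a : R} (ha1 : a ∈ D.M1) (hac : ∀ y ∈ D.N, a * y = y * a) :
    ∑ j, ∑ i, (a * (D.zb j * D.sp i)) ⊗ₜ[k] (D.sq i * D.wb j)
      = ∑ j, ∑ i, (D.zb j * D.sp i) ⊗ₜ[k] (D.sq i * (D.wb j * a)) := by
  refine cas_core D.zb D.wb D.sp D.sq D.EM a ?_ ?_ ?_
  · intro j
    exact (D.hdualA2 _ (D.M1.mul_mem ha1 (D.hzb j).1)).symm
  · intro l
    have h := D.hdualA1 (D.wb l * a) (D.M1.mul_mem (D.hwb l).1 ha1)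
    simpa only [mul_assoc] using h
  · intro l j
    have harg1 : D.wb l * (a * D.zb j) ∈ D.M1 :=
      D.M1.mul_mem (D.hwb l).1 (D.M1.mul_mem ha1 (D.hzb j).1)
    have hargc : ∀ y ∈ D.N, (D.wb l * (a * D.zb j)) * y = y * (D.wb l * (a * D.zb j)) :=
      comm_mul (D.hwb l).2 (comm_mul hac (D.hzb j).2)
    exact D.hsep_cas _ (D.hEM_mem _ harg1) (EM_comm_N D harg1 hargc)

lemma casB' {b : R} (hb : ∀ m ∈ D.M, b * m = m * b) :
    ∑ j, ∑ i, (b * (D.ub j * phi D (D.sq i))) ⊗ₜ[k] (phi D (D.sp i) * D.vb j)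
      = ∑ j, ∑ i, (D.ub j * phi D (D.sq i)) ⊗ₜ[k] (phi D (D.sp i) * (D.vb j * b)) := by
  refine cas_core D.ub D.vb (fun i => phi D (D.sq i)) (fun i => phi D (D.sp i)) D.EM1 b ?_ ?_ ?_
  · intro j
    exact (D.hdualB2 _).symm
  · intro l
    have h := D.hdualB1 (D.vb l * b)
    simpa only [mul_assoc] using h
  · intro l j
    have hargc : ∀ m ∈ D.M, (D.vb l * (b * D.ub j)) * m = m * (D.vb l * (b * D.ub j)) :=
      comm_mul (fun y hy => D.hvb l y hy) (comm_mul hb (fun y hy => D.hub j y hy))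
    exact casV D (D.hEM1_mem _) (fun m hm => (EM1_comm_M D hargc m hm).symm)

lemma mem_U_iff {u : R} : u ∈ D.U ↔ u ∈ D.M ∧ ∀ y ∈ D.N, u * y = y * u := by
  constructor
  · intro h
    obtain ⟨h1, h2⟩ := Algebra.mem_inf.1 h
    exact ⟨h1, fun y hy => ((Subalgebra.mem_centralizer_iff (R := k)).1 h2 y hy).symm⟩
  · rintro ⟨h1, h2⟩
    exact Algebra.mem_inf.2
      ⟨h1, (Subalgebra.mem_centralizer_iff (R := k)).2 fun y hy => (h2 y hy).symm⟩

lemma mem_A_iff {a : R} : a ∈ D.A ↔ a ∈ D.M1 ∧ ∀ y ∈ D.N, a * y = y * a := by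
  constructor
  · intro h
    obtain ⟨h1, h2⟩ := Algebra.mem_inf.1 h
    exact ⟨h1, fun y hy => ((Subalgebra.mem_centralizer_iff (R := k)).1 h2 y hy).symm⟩
  · rintro ⟨h1, h2⟩
    exact Algebra.mem_inf.2
      ⟨h1, (Subalgebra.mem_centralizer_iff (R := k)).2 fun y hy => (h2 y hy).symm⟩

lemma mem_V_iff {v : R} : v ∈ D.V ↔ v ∈ D.M1 ∧ ∀ m ∈ D.M, v * m = m * v := by
  constructor
  · intro h
    obtain ⟨h1, h2⟩ := Algebra.mem_inf.1 h
    exact ⟨h1, fun y hy => ((Subalgebra.mem_centralizer_iff (R := k)).1 h2 y hy).symm⟩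
  · rintro ⟨h1, h2⟩
    exact Algebra.mem_inf.2
      ⟨h1, (Subalgebra.mem_centralizer_iff (R := k)).2 fun y hy => (h2 y hy).symm⟩

lemma mem_B_iff {b : R} : b ∈ D.B ↔ ∀ m ∈ D.M, b * m = m * b := by
  constructor
  · intro h
    exact fun y hy => ((Subalgebra.mem_centralizer_iff (R := k)).1 h y hy).symm
  · intro h
    exact (Subalgebra.mem_centralizer_iff (R := k)).2 fun y hy => (h y hy).symm

lemma sepA : ∃ (n : ℕ) (p q : Fin n → R), (∀ i, p i ∈ D.A) ∧ (∀ i, q i ∈ D.A) ∧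
    (∑ i, p i * q i) = 1 ∧
    (∀ a ∈ D.A, ∑ i, (a * p i) ⊗ₜ[k] q i = ∑ i, p i ⊗ₜ[k] (q i * a)) := by
  have hzbA : ∀ j, D.zb j ∈ D.A := fun j => (mem_A_iff D).2 ⟨(D.hzb j).1, (D.hzb j).2⟩
  have hwbA : ∀ j, D.wb j ∈ D.A := fun j => (mem_A_iff D).2 ⟨(D.hwb j).1, (D.hwb j).2⟩
  have hspA : ∀ i, D.sp i ∈ D.A := fun i =>
    (mem_A_iff D).2 ⟨D.hMM1 (D.hsp i).1, (D.hsp i).2⟩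
  have hsqA : ∀ i, D.sq i ∈ D.A := fun i =>
    (mem_A_iff D).2 ⟨D.hMM1 (D.hsq i).1, (D.hsq i).2⟩
  refine ⟨D.nA * D.nS,
    fun i => D.lam • (D.zb (finProdFinEquiv.symm i).1 * D.sp (finProdFinEquiv.symm i).2),
    fun i => D.sq (finProdFinEquiv.symm i).2 * D.wb (finProdFinEquiv.symm i).1,
    fun i => D.A.smul_mem (D.A.mul_mem (hzbA _) (hspA _)) _,
    fun i => D.A.mul_mem (hsqA _) (hwbA _), ?_, ?_⟩
  · rw [Fintype.sum_equiv finProdFinEquiv.symm _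
      (fun x : Fin D.nA × Fin D.nS =>
        (D.lam • (D.zb x.1 * D.sp x.2)) * (D.sq x.2 * D.wb x.1)) (fun i => rfl),
      Fintype.sum_prod_type]
    have hj : ∀ j, ∑ i, (D.lam • (D.zb j * D.sp i)) * (D.sq i * D.wb j)
        = D.lam • (D.zb j * D.wb j) := by
      intro j
      have hterm : ∀ i, (D.lam • (D.zb j * D.sp i)) * (D.sq i * D.wb j)
          = D.lam • (D.zb j * ((D.sp i * D.sq i) * D.wb j)) := by
        intro i
        rw [smul_mul_assoc]
        congr 1
        rw [mul_assoc, ← mul_assoc (D.sp i) (D.sq i) (D.wb j)]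
      rw [Finset.sum_congr rfl fun i _ => hterm i, ← Finset.smul_sum]
      congr 1
      rw [← Finset.mul_sum, ← Finset.sum_mul, D.hsep_one, one_mul]
    rw [Finset.sum_congr rfl fun j _ => hj j, ← Finset.smul_sum, indexA D, smul_smul,
      mul_inv_cancel₀ D.lam_ne, one_smul]
  · intro a ha
    obtain ⟨ha1, hac⟩ := (mem_A_iff D).1 ha
    have hL : ∑ i : Fin (D.nA * D.nS),
        (a * (D.lam • (D.zb (finProdFinEquiv.symm i).1 * D.sp (finProdFinEquiv.symm i).2)))
          ⊗ₜ[k] (D.sq (finProdFinEquiv.symm i).2 * D.wb (finProdFinEquiv.symm i).1)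
        = D.lam • ∑ j, ∑ i, (a * (D.zb j * D.sp i)) ⊗ₜ[k] (D.sq i * D.wb j) := by
      rw [Fintype.sum_equiv finProdFinEquiv.symm _
        (fun x : Fin D.nA × Fin D.nS =>
          (a * (D.lam • (D.zb x.1 * D.sp x.2))) ⊗ₜ[k] (D.sq x.2 * D.wb x.1)) (fun i => rfl),
        Fintype.sum_prod_type, Finset.smul_sum]
      refine Finset.sum_congr rfl fun j _ => ?_
      rw [Finset.smul_sum]
      refine Finset.sum_congr rfl fun i _ => ?_
      rw [mul_smul_comm, TensorProduct.smul_tmul']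
    have hR : ∑ i : Fin (D.nA * D.nS),
        (D.lam • (D.zb (finProdFinEquiv.symm i).1 * D.sp (finProdFinEquiv.symm i).2))
          ⊗ₜ[k] ((D.sq (finProdFinEquiv.symm i).2 * D.wb (finProdFinEquiv.symm i).1) * a)
        = D.lam • ∑ j, ∑ i, (D.zb j * D.sp i) ⊗ₜ[k] (D.sq i * (D.wb j * a)) := by
      rw [Fintype.sum_equiv finProdFinEquiv.symm _
        (fun x : Fin D.nA × Fin D.nS =>
          (D.lam • (D.zb x.1 * D.sp x.2)) ⊗ₜ[k] ((D.sq x.2 * D.wb x.1) * a)) (fun i => rfl),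
        Fintype.sum_prod_type, Finset.smul_sum]
      refine Finset.sum_congr rfl fun j _ => ?_
      rw [Finset.smul_sum]
      refine Finset.sum_congr rfl fun i _ => ?_
      rw [TensorProduct.smul_tmul', mul_assoc]
    rw [hL, hR, casA' D ha1 hac]

lemma sepB : ∃ (n : ℕ) (p q : Fin n → R), (∀ i, p i ∈ D.B) ∧ (∀ i, q i ∈ D.B) ∧
    (∑ i, p i * q i) = 1 ∧
    (∀ b ∈ D.B, ∑ i, (b * p i) ⊗ₜ[k] q i = ∑ i, p i ⊗ₜ[k] (q i * b)) := by
  have hubB : ∀ j, D.ub j ∈ D.B := fun j => (mem_B_iff D).2 fun m hm => D.hub j m hm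
  have hvbB : ∀ j, D.vb j ∈ D.B := fun j => (mem_B_iff D).2 fun m hm => D.hvb j m hm
  have htpB : ∀ i, phi D (D.sq i) ∈ D.B := fun i =>
    (mem_B_iff D).2 fun m hm => (phi_comm_M D (D.hsq i).1 (D.hsq i).2 hm).symm
  have htqB : ∀ i, phi D (D.sp i) ∈ D.B := fun i =>
    (mem_B_iff D).2 fun m hm => (phi_comm_M D (D.hsp i).1 (D.hsp i).2 hm).symm
  have hptq : ∑ i, phi D (D.sq i) * phi D (D.sp i) = 1 := by
    rw [Finset.sum_congr rfl fun i _ => phi_antimul D (D.hsq i).2 (D.hsp i).1,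
      ← map_sum, D.hsep_one, phi_one D]
  refine ⟨D.nB * D.nS,
    fun i => D.lam • (D.ub (finProdFinEquiv.symm i).1 * phi D (D.sq (finProdFinEquiv.symm i).2)),
    fun i => phi D (D.sp (finProdFinEquiv.symm i).2) * D.vb (finProdFinEquiv.symm i).1,
    fun i => D.B.smul_mem (D.B.mul_mem (hubB _) (htpB _)) _,
    fun i => D.B.mul_mem (htqB _) (hvbB _), ?_, ?_⟩
  · rw [Fintype.sum_equiv finProdFinEquiv.symm _
      (fun x : Fin D.nB × Fin D.nS =>
        (D.lam • (D.ub x.1 * phi D (D.sq x.2))) * (phi D (D.sp x.2) * D.vb x.1)) (fun i => rfl),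
      Fintype.sum_prod_type]
    have hj : ∀ j, ∑ i, (D.lam • (D.ub j * phi D (D.sq i))) * (phi D (D.sp i) * D.vb j)
        = D.lam • (D.ub j * D.vb j) := by
      intro j
      have hterm : ∀ i, (D.lam • (D.ub j * phi D (D.sq i))) * (phi D (D.sp i) * D.vb j)
          = D.lam • (D.ub j * ((phi D (D.sq i) * phi D (D.sp i)) * D.vb j)) := by
        intro i
        rw [smul_mul_assoc]
        congr 1
        rw [mul_assoc, ← mul_assoc (phi D (D.sq i)) (phi D (D.sp i)) (D.vb j)]
      rw [Finset.sum_congr rfl fun i _ => hterm i, ← Finset.smul_sum]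
      congr 1
      rw [← Finset.mul_sum, ← Finset.sum_mul, hptq, one_mul]
    rw [Finset.sum_congr rfl fun j _ => hj j, ← Finset.smul_sum, indexB D, smul_smul,
      mul_inv_cancel₀ D.lam_ne, one_smul]
  · intro b hb
    have hbc : ∀ m ∈ D.M, b * m = m * b := (mem_B_iff D).1 hb
    have hL : ∑ i : Fin (D.nB * D.nS),
        (b * (D.lam • (D.ub (finProdFinEquiv.symm i).1 * phi D (D.sq (finProdFinEquiv.symm i).2))))
          ⊗ₜ[k] (phi D (D.sp (finProdFinEquiv.symm i).2) * D.vb (finProdFinEquiv.symm i).1)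
        = D.lam • ∑ j, ∑ i, (b * (D.ub j * phi D (D.sq i)))
            ⊗ₜ[k] (phi D (D.sp i) * D.vb j) := by
      rw [Fintype.sum_equiv finProdFinEquiv.symm _
        (fun x : Fin D.nB × Fin D.nS =>
          (b * (D.lam • (D.ub x.1 * phi D (D.sq x.2)))) ⊗ₜ[k] (phi D (D.sp x.2) * D.vb x.1))
        (fun i => rfl), Fintype.sum_prod_type, Finset.smul_sum]
      refine Finset.sum_congr rfl fun j _ => ?_
      rw [Finset.smul_sum]
      refine Finset.sum_congr rfl fun i _ => ?_
      rw [mul_smul_comm, TensorProduct.smul_tmul']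
    have hR : ∑ i : Fin (D.nB * D.nS),
        (D.lam • (D.ub (finProdFinEquiv.symm i).1 * phi D (D.sq (finProdFinEquiv.symm i).2)))
          ⊗ₜ[k] ((phi D (D.sp (finProdFinEquiv.symm i).2) * D.vb (finProdFinEquiv.symm i).1) * b)
        = D.lam • ∑ j, ∑ i, (D.ub j * phi D (D.sq i))
            ⊗ₜ[k] (phi D (D.sp i) * (D.vb j * b)) := by
      rw [Fintype.sum_equiv finProdFinEquiv.symm _
        (fun x : Fin D.nB × Fin D.nS =>
          (D.lam • (D.ub x.1 * phi D (D.sq x.2))) ⊗ₜ[k] ((phi D (D.sp x.2) * D.vb x.1) * b))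
        (fun i => rfl), Fintype.sum_prod_type, Finset.smul_sum]
      refine Finset.sum_congr rfl fun j _ => ?_
      rw [Finset.smul_sum]
      refine Finset.sum_congr rfl fun i _ => ?_
      rw [TensorProduct.smul_tmul', mul_assoc]
    rw [hL, hR, casB' D hbc]

end Aux

/-- `A` and `B` are separable `k`-algebras, `T|_A` and `T|_B` are
non-degenerate traces, `A/U` is a strongly separable extension with conditional
expectation `E_M|_A`, dual bases `{z_j}, {w_j}` and index `λ⁻¹`, and `B/V` is a
strongly separable extension with conditional expectation `E_{M₁}|_B`, dual bases
`{u_i}, {v_i}` and index `λ⁻¹`. -/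
theorem stmt2 {k : Type*} [Field k] {R : Type*} [Ring R] [Algebra k R] (D : D2 k R) :
    -- A is a separable k-algebra
    (∃ (n : ℕ) (p q : Fin n → R), (∀ i, p i ∈ D.A) ∧ (∀ i, q i ∈ D.A) ∧
      (∑ i, p i * q i) = 1 ∧
      (∀ a ∈ D.A, ∑ i, (a * p i) ⊗ₜ[k] q i = ∑ i, p i ⊗ₜ[k] (q i * a))) ∧
    -- B is a separable k-algebra
    (∃ (n : ℕ) (p q : Fin n → R), (∀ i, p i ∈ D.B) ∧ (∀ i, q i ∈ D.B) ∧
      (∑ i, p i * q i) = 1 ∧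
      (∀ b ∈ D.B, ∑ i, (b * p i) ⊗ₜ[k] q i = ∑ i, p i ⊗ₜ[k] (q i * b))) ∧
    -- T|_A is a non-degenerate trace
    (∀ a ∈ D.A, ∀ a' ∈ D.A, D.T (a * a') = D.T (a' * a)) ∧
    (∀ a ∈ D.A, (∀ a' ∈ D.A, D.T (a * a') = 0) → a = 0) ∧
    -- T|_B is a non-degenerate trace
    (∀ b ∈ D.B, ∀ b' ∈ D.B, D.T (b * b') = D.T (b' * b)) ∧
    (∀ b ∈ D.B, (∀ b' ∈ D.B, D.T (b * b') = 0) → b = 0) ∧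
    -- A/U is a strongly separable extension with conditional expectation E_M|_A,
    -- dual bases {z_j}, {w_j} and index λ⁻¹
    (∀ a ∈ D.A, D.EM a ∈ D.U) ∧
    (∀ u ∈ D.U, ∀ a ∈ D.A, D.EM (u * a) = u * D.EM a ∧ D.EM (a * u) = D.EM a * u) ∧
    (∀ a ∈ D.A, (∑ j, D.EM (a * D.zb j) * D.wb j = a) ∧
      (∑ j, D.zb j * D.EM (D.wb j * a) = a)) ∧
    (∑ j, D.zb j * D.wb j) = D.lam⁻¹ • (1 : R) ∧
    -- B/V is a strongly separable extension with conditional expectation E_{M₁}|_B,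
    -- dual bases {u_i}, {v_i} and index λ⁻¹
    (∀ b ∈ D.B, D.EM1 b ∈ D.V) ∧
    (∀ v ∈ D.V, ∀ b ∈ D.B, D.EM1 (v * b) = v * D.EM1 b ∧ D.EM1 (b * v) = D.EM1 b * v) ∧
    (∀ b ∈ D.B, (∑ i, D.EM1 (b * D.ub i) * D.vb i = b) ∧
      (∑ i, D.ub i * D.EM1 (D.vb i * b) = b)) ∧
    (∑ i, D.ub i * D.vb i) = D.lam⁻¹ • (1 : R) := by
  refine ⟨sepA D, sepB D, fun a _ a' _ => D.hT_tr a a', ?_, fun b _ b' _ => D.hT_tr b b',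
    ?_, ?_, ?_, ?_, indexA D, ?_, ?_, ?_, indexB D⟩
  · -- T|_A non-degenerate
    intro a ha h
    obtain ⟨ha1, hac⟩ := (mem_A_iff D).1 ha
    refine nondegA' D ha1 hac ?_
    intro a' h1 h2
    exact h a' ((mem_A_iff D).2 ⟨h1, h2⟩)
  · -- T|_B non-degenerate
    intro b hb h
    refine nondegB' D ((mem_B_iff D).1 hb) ?_
    intro b' hb'
    exact h b' ((mem_B_iff D).2 hb')
  · -- EM maps A to U
    intro a ha
    obtain ⟨ha1, hac⟩ := (mem_A_iff D).1 ha
    exact (mem_U_iff D).2 ⟨D.hEM_mem a ha1, EM_comm_N D ha1 hac⟩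
  · -- EM is a U-bimodule map
    intro u hu a ha
    have huM : u ∈ D.M := ((mem_U_iff D).1 hu).1
    have ha1 : a ∈ D.M1 := ((mem_A_iff D).1 ha).1
    exact ⟨D.hEM_left u huM a ha1, D.hEM_right u huM a ha1⟩
  · -- dual bases for A over U
    intro a ha
    have ha1 : a ∈ D.M1 := ((mem_A_iff D).1 ha).1
    exact ⟨D.hdualA1 a ha1, D.hdualA2 a ha1⟩
  · -- EM1 maps B to V
    intro b hb
    exact (mem_V_iff D).2 ⟨D.hEM1_mem b, EM1_comm_M D ((mem_B_iff D).1 hb)⟩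
  · -- EM1 is a V-bimodule map
    intro v hv b _
    have hv1 : v ∈ D.M1 := ((mem_V_iff D).1 hv).1
    exact ⟨D.hEM1_left v hv1 b, D.hEM1_right v hv1 b⟩
  · -- dual bases for B over V
    intro b _
    exact ⟨D.hdualB1 b, D.hdualB2 b⟩
end

section
/- The multiplication map m₁ ⊗ b ↦ m₁ b induces a k-vector space isomorphism M₁ ⊗_V B ≅ M₂, with inverse x ↦ E_{M₁}(x u_j) ⊗ v_j. Similarly, the multiplication map m ⊗ a ↦ m a induces a k-vector space isomorphism M ⊗_U A ≅ M₁. -/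
open scoped TensorProduct
open TensorProduct

open D2


open scoped TensorProduct
open TensorProduct

/-- Auxiliary: the standard retraction argument for a relative tensor product. -/
theorem key_aux {k : Type*} [Field k] {R : Type*} [Ring R] [Algebra k R]
    (M1' V' B' : Subalgebra k R) (E' : R →ₗ[k] R) {n : ℕ} (ub vb : Fin n → R)
    (hvbB : ∀ i, vb i ∈ B')
    (hBmul : ∀ b ∈ B', ∀ i, b * ub i ∈ B')
    (hEV : ∀ b ∈ B', E' b ∈ V')
    (hEleft : ∀ x ∈ M1', ∀ b ∈ B', E' (x * b) = x * E' b)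
    (hdual : ∀ b ∈ B', ∑ i, E' (b * ub i) * vb i = b) :
    ∀ t ∈ Submodule.span k {z : R ⊗[k] R | ∃ x ∈ M1', ∃ b ∈ B', z = x ⊗ₜ[k] b},
      (∑ i, E' (LinearMap.mul' k R t * ub i) ⊗ₜ[k] vb i) - t ∈
        Submodule.span k {z : R ⊗[k] R | ∃ x ∈ M1', ∃ v ∈ V', ∃ b ∈ B',
          z = (x * v) ⊗ₜ[k] b - x ⊗ₜ[k] (v * b)} := by
  intro t ht
  set Qs := Submodule.span k {z : R ⊗[k] R | ∃ x ∈ M1', ∃ v ∈ V', ∃ b ∈ B',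
      z = (x * v) ⊗ₜ[k] b - x ⊗ₜ[k] (v * b)} with hQs
  let L : R ⊗[k] R →ₗ[k] R ⊗[k] R :=
    (∑ i, ((TensorProduct.mk k R R).flip (vb i)).comp
      (E'.comp (LinearMap.mulRight k (ub i)))).comp (LinearMap.mul' k R) - LinearMap.id
  have hL : ∀ s : R ⊗[k] R,
      L s = (∑ i, E' (LinearMap.mul' k R s * ub i) ⊗ₜ[k] vb i) - s := by
    intro s
    simp [L, LinearMap.sum_apply, LinearMap.sub_apply]
  have hspan : Submodule.span k {z : R ⊗[k] R | ∃ x ∈ M1', ∃ b ∈ B', z = x ⊗ₜ[k] b}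
      ≤ Qs.comap L := by
    rw [Submodule.span_le]
    rintro _ ⟨x, hx, b, hb, rfl⟩
    rw [SetLike.mem_coe, Submodule.mem_comap, hL, LinearMap.mul'_apply]
    have h2 : ∀ i, E' (x * b * ub i) = x * E' (b * ub i) := fun i => by
      rw [mul_assoc]; exact hEleft x hx _ (hBmul b hb i)
    have h3 : x ⊗ₜ[k] b = ∑ i, x ⊗ₜ[k] (E' (b * ub i) * vb i) := by
      rw [← TensorProduct.tmul_sum, hdual b hb]
    have heq : (∑ i, E' (x * b * ub i) ⊗ₜ[k] vb i) - x ⊗ₜ[k] b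
        = ∑ i, ((x * E' (b * ub i)) ⊗ₜ[k] vb i - x ⊗ₜ[k] (E' (b * ub i) * vb i)) := by
      rw [Finset.sum_sub_distrib, h3]
      congr 1
      exact Finset.sum_congr rfl fun i _ => by rw [h2]
    rw [heq]
    exact Submodule.sum_mem _ fun i _ => Submodule.subset_span
      ⟨x, hx, E' (b * ub i), hEV _ (hBmul b hb i), vb i, hvbB i, rfl⟩
  have := hspan ht
  rw [Submodule.mem_comap, hL] at this
  exact this

/-- the multiplication map `m₁ ⊗ b ↦ m₁ b` induces a `k`-vector space
isomorphism `M₁ ⊗_V B ≅ M₂`, with inverse `x ↦ ∑ E_{M₁}(x u_j) ⊗ v_j`; similarly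
`m ⊗ a ↦ m a` induces a `k`-vector space isomorphism `M ⊗_U A ≅ M₁`.
(The relative tensor product `M₁ ⊗_V B` is presented as the quotient of the span
`P` of `{x ⊗ b | x ∈ M₁, b ∈ B}` inside `M₁ ⊗_k B ⊆ R ⊗_k R` by the span `Q` of
the `V`-balancing relators; the statement asserts that the multiplication map kills
exactly `Q` and maps `P` onto `M₂`, i.e. that it induces an isomorphism `P/Q ≅ M₂`,
and similarly for `M ⊗_U A ≅ M₁`.) -/
theorem stmt3 {k : Type*} [Field k] {R : Type*} [Ring R] [Algebra k R] (D : D2 k R) :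
    let mul2 : R ⊗[k] R →ₗ[k] R := LinearMap.mul' k R
    let P : Submodule k (R ⊗[k] R) :=
      Submodule.span k {z : R ⊗[k] R | ∃ x ∈ D.M1, ∃ b ∈ D.B, z = x ⊗ₜ[k] b}
    let Q : Submodule k (R ⊗[k] R) :=
      Submodule.span k {z : R ⊗[k] R | ∃ x ∈ D.M1, ∃ v ∈ D.V, ∃ b ∈ D.B,
        z = (x * v) ⊗ₜ[k] b - x ⊗ₜ[k] (v * b)}
    let P' : Submodule k (R ⊗[k] R) :=
      Submodule.span k {z : R ⊗[k] R | ∃ m ∈ D.M, ∃ a ∈ D.A, z = m ⊗ₜ[k] a}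
    let Q' : Submodule k (R ⊗[k] R) :=
      Submodule.span k {z : R ⊗[k] R | ∃ m ∈ D.M, ∃ u ∈ D.U, ∃ a ∈ D.A,
        z = (m * u) ⊗ₜ[k] a - m ⊗ₜ[k] (u * a)}
    -- M₁ ⊗_V B ≅ M₂ via multiplication:
    (Q ≤ P) ∧
    Submodule.map mul2 P = (⊤ : Submodule k R) ∧
    (∀ t ∈ Q, mul2 t = 0) ∧
    (∀ t ∈ P, mul2 t = 0 → t ∈ Q) ∧
    -- with inverse x ↦ ∑ E_{M₁}(x u_j) ⊗ v_j:
    (∀ x : R, (∑ i, D.EM1 (x * D.ub i) ⊗ₜ[k] D.vb i) ∈ P ∧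
      mul2 (∑ i, D.EM1 (x * D.ub i) ⊗ₜ[k] D.vb i) = x) ∧
    (∀ t ∈ P, (∑ i, D.EM1 (mul2 t * D.ub i) ⊗ₜ[k] D.vb i) - t ∈ Q) ∧
    -- M ⊗_U A ≅ M₁ via multiplication:
    (Q' ≤ P') ∧
    Submodule.map mul2 P' = D.M1.toSubmodule ∧
    (∀ t ∈ Q', mul2 t = 0) ∧
    (∀ t ∈ P', mul2 t = 0 → t ∈ Q') := by
  intro mul2 P Q P' Q'
  have hmul2 : ∀ (x y : R), mul2 (x ⊗ₜ[k] y) = x * y := fun x y => LinearMap.mul'_apply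
  -- membership facts for the B-side
  have hubB : ∀ i, D.ub i ∈ D.B := fun i =>
    (Subalgebra.mem_centralizer_iff k).mpr fun y hy => (D.hub i y hy).symm
  have hvbB : ∀ i, D.vb i ∈ D.B := fun i =>
    (Subalgebra.mem_centralizer_iff k).mpr fun y hy => (D.hvb i y hy).symm
  have hBmul : ∀ b ∈ D.B, ∀ i, b * D.ub i ∈ D.B := fun b hb i => mul_mem hb (hubB i)
  have hEV : ∀ b ∈ D.B, D.EM1 b ∈ D.V := by
    intro b hb
    refine Algebra.mem_inf.mpr ⟨D.hEM1_mem b, (Subalgebra.mem_centralizer_iff k).mpr ?_⟩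
    intro g hg
    have hg1 : g ∈ D.M1 := D.hMM1 hg
    have hgb : g * b = b * g := (Subalgebra.mem_centralizer_iff k).mp hb g hg
    calc g * D.EM1 b = D.EM1 (g * b) := (D.hEM1_left g hg1 b).symm
      _ = D.EM1 (b * g) := by rw [hgb]
      _ = D.EM1 b * g := D.hEM1_right g hg1 b
  have keyB := key_aux D.M1 D.V D.B D.EM1 D.ub D.vb hvbB hBmul hEV
    (fun x hx b _ => D.hEM1_left x hx b) (fun b _ => D.hdualB1 b)
  -- membership facts for the A-side
  have hzbA : ∀ j, D.zb j ∈ D.A := fun j =>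
    Algebra.mem_inf.mpr ⟨(D.hzb j).1,
      (Subalgebra.mem_centralizer_iff k).mpr fun y hy => ((D.hzb j).2 y hy).symm⟩
  have hwbA : ∀ j, D.wb j ∈ D.A := fun j =>
    Algebra.mem_inf.mpr ⟨(D.hwb j).1,
      (Subalgebra.mem_centralizer_iff k).mpr fun y hy => ((D.hwb j).2 y hy).symm⟩
  have hAM1 : ∀ a ∈ D.A, a ∈ D.M1 := fun a ha => (Algebra.mem_inf.mp ha).1
  have hAmul : ∀ a ∈ D.A, ∀ j, a * D.zb j ∈ D.A := fun a ha j => mul_mem ha (hzbA j)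
  have hEU : ∀ a ∈ D.A, D.EM a ∈ D.U := by
    intro a ha
    have ha1 : a ∈ D.M1 := hAM1 a ha
    refine Algebra.mem_inf.mpr ⟨D.hEM_mem a ha1, (Subalgebra.mem_centralizer_iff k).mpr ?_⟩
    intro g hg
    have hgM : g ∈ D.M := D.hNM hg
    have hga : g * a = a * g := (Subalgebra.mem_centralizer_iff k).mp
      (Algebra.mem_inf.mp ha).2 g hg
    calc g * D.EM a = D.EM (g * a) := (D.hEM_left g hgM a ha1).symm
      _ = D.EM (a * g) := by rw [hga]
      _ = D.EM a * g := D.hEM_right g hgM a ha1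
  have keyA := key_aux D.M D.U D.A D.EM D.zb D.wb hwbA hAmul hEU
    (fun x hx b hb => D.hEM_left x hx b (hAM1 b hb)) (fun a ha => D.hdualA1 a (hAM1 a ha))
  -- the inverse map lies in P and multiplies back to x
  have hinv : ∀ x : R, (∑ i, D.EM1 (x * D.ub i) ⊗ₜ[k] D.vb i) ∈ P ∧
      mul2 (∑ i, D.EM1 (x * D.ub i) ⊗ₜ[k] D.vb i) = x := by
    intro x
    constructor
    · exact Submodule.sum_mem _ fun i _ => Submodule.subset_span
        ⟨D.EM1 (x * D.ub i), D.hEM1_mem _, D.vb i, hvbB i, rfl⟩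
    · rw [map_sum]
      simp only [hmul2]
      exact D.hdualB1 x
  refine ⟨?_, ?_, ?_, ?_, hinv, ?_, ?_, ?_, ?_, ?_⟩
  -- Q ≤ P
  · rw [Submodule.span_le]
    rintro _ ⟨x, hx, v, hv, b, hb, rfl⟩
    have hv2 := Algebra.mem_inf.mp hv
    exact Submodule.sub_mem _
      (Submodule.subset_span ⟨x * v, mul_mem hx hv2.1, b, hb, rfl⟩)
      (Submodule.subset_span ⟨x, hx, v * b, mul_mem hv2.2 hb, rfl⟩)
  -- map mul2 P = ⊤
  · rw [eq_top_iff]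
    rintro x -
    exact ⟨_, (hinv x).1, (hinv x).2⟩
  -- Q ≤ ker mul2
  · intro t ht
    have hle : Q ≤ LinearMap.ker mul2 := by
      rw [Submodule.span_le]
      rintro _ ⟨x, hx, v, hv, b, hb, rfl⟩
      simp [LinearMap.mem_ker, map_sub, hmul2, mul_assoc]
    exact hle ht
  -- exactness for (P, Q)
  · intro t ht h0
    have := keyB t ht
    rw [show LinearMap.mul' k R t = mul2 t from rfl, h0] at this
    simp only [zero_mul, map_zero, TensorProduct.zero_tmul, Finset.sum_const_zero,
      zero_sub] at this
    exact (neg_mem_iff).mp this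
  -- retraction
  · exact keyB
  -- Q' ≤ P'
  · rw [Submodule.span_le]
    rintro _ ⟨m, hm, u, hu, a, ha, rfl⟩
    have hu2 := Algebra.mem_inf.mp hu
    have huA : u * a ∈ D.A := mul_mem (Algebra.mem_inf.mpr ⟨D.hMM1 hu2.1,
      hu2.2⟩) ha
    exact Submodule.sub_mem _
      (Submodule.subset_span ⟨m * u, mul_mem hm hu2.1, a, ha, rfl⟩)
      (Submodule.subset_span ⟨m, hm, u * a, huA, rfl⟩)
  -- map mul2 P' = M1
  · apply le_antisymm
    · rw [Submodule.map_le_iff_le_comap, Submodule.span_le]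
      rintro _ ⟨m, hm, a, ha, rfl⟩
      rw [SetLike.mem_coe, Submodule.mem_comap]
      show mul2 (m ⊗ₜ[k] a) ∈ D.M1
      rw [hmul2]
      exact mul_mem (D.hMM1 hm) (hAM1 a ha)
    · intro x hx
      refine ⟨∑ j, D.EM (x * D.zb j) ⊗ₜ[k] D.wb j, ?_, ?_⟩
      · exact Submodule.sum_mem _ fun j _ => Submodule.subset_span
          ⟨D.EM (x * D.zb j), D.hEM_mem _ (mul_mem hx (D.hzb j).1), D.wb j, hwbA j, rfl⟩
      · rw [map_sum]
        simp only [hmul2]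
        exact D.hdualA1 x hx
  -- Q' ≤ ker mul2
  · intro t ht
    have hle : Q' ≤ LinearMap.ker mul2 := by
      rw [Submodule.span_le]
      rintro _ ⟨m, hm, u, hu, a, ha, rfl⟩
      simp [LinearMap.mem_ker, map_sub, hmul2, mul_assoc]
    exact hle ht
  -- exactness for (P', Q')
  · intro t ht h0
    have := keyA t ht
    rw [show LinearMap.mul' k R t = mul2 t from rfl, h0] at this
    simp only [zero_mul, map_zero, TensorProduct.zero_tmul, Finset.sum_const_zero,
      zero_sub] at this
    exact (neg_mem_iff).mp this
end

section
/- There exists a B-bimodule map E_B : C → B such that E_B restricted to B is the identity of B, E_B(e₁) = λ 1, and T(E_B(c) b) = T(b c) for all b ∈ B and c ∈ C; in particular, E_B is a T-preserving conditional expectation from C onto B. -/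
open scoped TensorProduct
open TensorProduct

open D2

/-- there exists a `B`-bimodule map `E_B : C → B` restricting to the
identity on `B`, with `E_B(e₁) = λ 1` and `T(E_B(c) b) = T(b c)` for all `b ∈ B`,
`c ∈ C`; in particular `E_B` is a `T`-preserving conditional expectation of `C`
onto `B`. -/
theorem stmt4 {k : Type*} [Field k] {R : Type*} [Ring R] [Algebra k R] (D : D2 k R) :
    ∃ EB : R →ₗ[k] R,
      (∀ c ∈ D.C, EB c ∈ D.B) ∧
      (∀ b ∈ D.B, EB b = b) ∧
      (∀ b ∈ D.B, ∀ c ∈ D.C, EB (b * c) = b * EB c) ∧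
      (∀ b ∈ D.B, ∀ c ∈ D.C, EB (c * b) = EB c * b) ∧
      EB D.e1 = D.lam • (1 : R) ∧
      (∀ b ∈ D.B, ∀ c ∈ D.C, D.T (EB c * b) = D.T (b * c)) ∧
      (∀ c ∈ D.C, D.T (EB c) = D.T c) := by
  classical
  -- commutation lemma: if c centralizes N, then ∑ xᵢ c yᵢ centralizes M
  have key : ∀ c : R, (∀ y ∈ D.N, y * c = c * y) →
      ∀ m ∈ D.M, m * (∑ i, D.xb i * c * D.yb i) = (∑ i, D.xb i * c * D.yb i) * m := by
    intro c hc m hm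
    have step : ∀ i, m * (D.xb i * c * D.yb i)
        = ∑ j, (D.xb j * c) * (D.E (D.yb j * m * D.xb i) * D.yb i) := by
      intro i
      have hmx : m * D.xb i ∈ D.M := mul_mem hm (D.hxb i)
      have h2 := D.hdual2 (m * D.xb i) hmx
      have e0 : m * (D.xb i * c * D.yb i) = (m * D.xb i) * (c * D.yb i) := by noncomm_ring
      rw [e0, ← h2, Finset.sum_mul]
      refine Finset.sum_congr rfl fun j _ => ?_
      have hn : D.E (D.yb j * (m * D.xb i)) ∈ D.N :=
        D.hE_mem _ (mul_mem (D.hyb j) hmx)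
      have hcn := hc _ hn
      have e2 : D.xb j * D.E (D.yb j * (m * D.xb i)) * (c * D.yb i)
          = D.xb j * ((D.E (D.yb j * (m * D.xb i)) * c) * D.yb i) := by noncomm_ring
      rw [e2, hcn, mul_assoc (D.yb j) m (D.xb i)]
      noncomm_ring
    calc m * (∑ i, D.xb i * c * D.yb i)
        = ∑ i, ∑ j, (D.xb j * c) * (D.E (D.yb j * m * D.xb i) * D.yb i) := by
          rw [Finset.mul_sum]; exact Finset.sum_congr rfl fun i _ => step i
      _ = ∑ j, (D.xb j * c) * (∑ i, D.E (D.yb j * m * D.xb i) * D.yb i) := by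
          rw [Finset.sum_comm]
          exact Finset.sum_congr rfl fun j _ => (Finset.mul_sum _ _ _).symm
      _ = ∑ j, (D.xb j * c) * (D.yb j * m) := by
          refine Finset.sum_congr rfl fun j _ => ?_
          rw [D.hdual1 (D.yb j * m) (mul_mem (D.hyb j) hm)]
      _ = (∑ j, D.xb j * c * D.yb j) * m := by
          rw [Finset.sum_mul]
          exact Finset.sum_congr rfl fun j _ => by noncomm_ring
  -- ∑ xᵢ e₁ yᵢ = 1 in M₁
  have hone : (∑ i, D.xb i * D.e1 * D.yb i) = 1 := by
    have hz : ∀ x ∈ D.M1.toSubmodule, (∑ i, D.xb i * D.e1 * D.yb i) * x = x := by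
      intro x hx
      rw [D.hM1_gen] at hx
      induction hx using Submodule.span_induction with
      | mem z hzz =>
        obtain ⟨m, hm, m', hm', rfl⟩ := hzz
        rw [Finset.sum_mul]
        have hterm : ∀ i, (D.xb i * D.e1 * D.yb i) * (m * D.e1 * m')
            = (D.xb i * D.E (D.yb i * m)) * (D.e1 * m') := by
          intro i
          have hj := D.he1_jones (D.yb i * m) (mul_mem (D.hyb i) hm)
          have hj' := D.he1_jones' (D.yb i * m) (mul_mem (D.hyb i) hm)
          calc (D.xb i * D.e1 * D.yb i) * (m * D.e1 * m')
              = D.xb i * ((D.e1 * (D.yb i * m) * D.e1) * m') := by noncomm_ring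
            _ = D.xb i * ((D.e1 * D.E (D.yb i * m)) * m') := by rw [hj]
            _ = D.xb i * ((D.E (D.yb i * m) * D.e1) * m') := by rw [hj']
            _ = (D.xb i * D.E (D.yb i * m)) * (D.e1 * m') := by noncomm_ring
        rw [Finset.sum_congr rfl fun i _ => hterm i, ← Finset.sum_mul,
          D.hdual2 m hm]
        noncomm_ring
      | zero => simp
      | add a b _ _ ha hb => rw [mul_add, ha, hb]
      | smul r a _ ha => rw [mul_smul_comm, ha]
    have h1 := hz 1 D.M1.one_mem
    rwa [mul_one] at h1
  -- the conditional expectation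
  set EB : R →ₗ[k] R :=
    D.lam • ∑ i, (LinearMap.mulRight k (D.yb i)) ∘ₗ (LinearMap.mulLeft k (D.xb i)) with hEBdef
  have hEB : ∀ c : R, EB c = D.lam • ∑ i, D.xb i * c * D.yb i := by
    intro c
    simp only [hEBdef, LinearMap.smul_apply, LinearMap.sum_apply, LinearMap.comp_apply,
      LinearMap.mulLeft_apply, LinearMap.mulRight_apply]
  have hCmem : ∀ c ∈ D.C, ∀ y ∈ D.N, y * c = c * y := by
    intro c hc y hy
    exact (Subalgebra.mem_centralizer_iff k).mp hc y hy
  have hBmem : ∀ b ∈ D.B, ∀ m ∈ D.M, m * b = b * m := by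
    intro b hb m hm
    exact (Subalgebra.mem_centralizer_iff k).mp hb m hm
  -- range condition
  have hrange : ∀ c ∈ D.C, EB c ∈ D.B := by
    intro c hc
    rw [hEB]
    refine Subalgebra.smul_mem _ ?_ _
    exact (Subalgebra.mem_centralizer_iff k).mpr (fun m hm => key c (hCmem c hc) m hm)
  -- identity on B
  have hid : ∀ b ∈ D.B, EB b = b := by
    intro b hb
    calc EB b = D.lam • ∑ i, D.xb i * b * D.yb i := hEB b
      _ = D.lam • ∑ i, b * (D.xb i * D.yb i) := by
          congr 1
          refine Finset.sum_congr rfl fun i _ => ?_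
          rw [hBmem b hb (D.xb i) (D.hxb i), mul_assoc]
      _ = D.lam • (b * ∑ i, D.xb i * D.yb i) := by rw [Finset.mul_sum]
      _ = b := by
          rw [D.hindex, mul_smul_comm, mul_one, smul_smul,
            mul_inv_cancel₀ D.lam_ne, one_smul]
  -- left B-linearity
  have hleft : ∀ b ∈ D.B, ∀ c ∈ D.C, EB (b * c) = b * EB c := by
    intro b hb c hc
    rw [hEB, hEB, mul_smul_comm, Finset.mul_sum]
    congr 1
    refine Finset.sum_congr rfl fun i _ => ?_
    have h := hBmem b hb (D.xb i) (D.hxb i)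
    calc D.xb i * (b * c) * D.yb i = (D.xb i * b) * (c * D.yb i) := by noncomm_ring
      _ = (b * D.xb i) * (c * D.yb i) := by rw [h]
      _ = b * (D.xb i * c * D.yb i) := by noncomm_ring
  -- right B-linearity
  have hright : ∀ b ∈ D.B, ∀ c ∈ D.C, EB (c * b) = EB c * b := by
    intro b hb c hc
    rw [hEB, hEB, smul_mul_assoc, Finset.sum_mul]
    congr 1
    refine Finset.sum_congr rfl fun i _ => ?_
    have h := hBmem b hb (D.yb i) (D.hyb i)
    calc D.xb i * (c * b) * D.yb i = (D.xb i * c) * (b * D.yb i) := by noncomm_ring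
      _ = (D.xb i * c) * (D.yb i * b) := by rw [← h]
      _ = (D.xb i * c * D.yb i) * b := by noncomm_ring
  -- value at e₁
  have he1 : EB D.e1 = D.lam • (1 : R) := by rw [hEB, hone]
  -- trace property
  have htr : ∀ b ∈ D.B, ∀ c ∈ D.C, D.T (EB c * b) = D.T (b * c) := by
    intro b hb c hc
    have e : EB c * b = D.lam • ∑ i, D.xb i * ((c * b) * D.yb i) := by
      rw [hEB, smul_mul_assoc, Finset.sum_mul]
      congr 1
      refine Finset.sum_congr rfl fun i _ => ?_
      have h := hBmem b hb (D.yb i) (D.hyb i)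
      calc (D.xb i * c * D.yb i) * b = (D.xb i * c) * (D.yb i * b) := by noncomm_ring
        _ = (D.xb i * c) * (b * D.yb i) := by rw [h]
        _ = D.xb i * ((c * b) * D.yb i) := by noncomm_ring
    rw [e, map_smul, map_sum, smul_eq_mul]
    have hsum : ∑ i, D.T (D.xb i * ((c * b) * D.yb i))
        = D.T ((c * b) * ∑ i, D.yb i * D.xb i) := by
      rw [Finset.mul_sum, map_sum]
      refine Finset.sum_congr rfl fun i _ => ?_
      rw [D.hT_tr]
      congr 1
      noncomm_ring
    rw [hsum, D.hindex', mul_smul_comm, mul_one, map_smul, smul_eq_mul,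
      ← mul_assoc, mul_inv_cancel₀ D.lam_ne, one_mul, D.hT_tr]
  -- trace-preserving
  have hTpres : ∀ c ∈ D.C, D.T (EB c) = D.T c := by
    intro c hc
    have h := htr 1 D.B.one_mem c hc
    rwa [mul_one, one_mul] at h
  exact ⟨EB, hrange, hid, hleft, hright, he1, htr, hTpres⟩
end

section
/- Commuting square condition: E_A ∘ E_B = E_B ∘ E_A as linear maps C → C; indeed both composites equal the map c ↦ T(c c_i) d_i. -/
open scoped TensorProduct
open TensorProduct

open D2

namespace D2

variable {k : Type*} [Field k] {R : Type*} [Ring R] [Algebra k R] (D : D2 k R)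

/-- auxiliary: the anti-isomorphism `φ : U → V`. -/
def phi (u : R) : R := ∑ l, D.xb l * u * D.e1 * D.yb l

lemma trace_EM1_swap (x y : R) : D.T (D.EM1 x * y) = D.T (x * D.EM1 y) := by
  rw [← D.hTEM1 (D.EM1 x * y), D.hEM1_left _ (D.hEM1_mem x) y,
    ← D.hEM1_right _ (D.hEM1_mem y) x, D.hTEM1]

lemma EM_e1 : D.EM D.e1 = D.lam • 1 := by
  have h := D.hEM_e1 1 D.M.one_mem 1 D.M.one_mem
  simpa using h

lemma T_mul_e1 (z : R) (hz : z ∈ D.M) : D.T (z * D.e1) = D.lam * D.T z := by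
  have hz1 : z * D.e1 ∈ D.M1 := mul_mem (D.hMM1 hz) D.he1_mem
  rw [← D.hTEM _ hz1, D.hEM_left z hz D.e1 D.he1_mem, D.EM_e1, mul_smul_comm, mul_one,
    map_smul, smul_eq_mul]

lemma EM1_comm_M (x : R) (hx : ∀ m ∈ D.M, x * m = m * x) :
    ∀ m ∈ D.M, D.EM1 x * m = m * D.EM1 x := by
  intro m hm
  rw [← D.hEM1_right m (D.hMM1 hm) x, hx m hm, D.hEM1_left m (D.hMM1 hm) x]

lemma sum_x_e1_y : ∑ l, D.xb l * D.e1 * D.yb l = 1 := by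
  set s : R := ∑ l, D.xb l * D.e1 * D.yb l with hs
  let P : Submodule k R :=
    { carrier := {z | s * z = z}
      add_mem' := by
        intro a b ha hb
        simp only [Set.mem_setOf_eq] at *
        rw [mul_add, ha, hb]
      zero_mem' := by simp
      smul_mem' := by
        intro c x hx
        simp only [Set.mem_setOf_eq] at *
        rw [mul_smul_comm, hx] }
  have hgen : {z : R | ∃ m ∈ D.M, ∃ m' ∈ D.M, z = m * D.e1 * m'} ⊆ P := by
    rintro z ⟨m, hm, m', hm', rfl⟩
    show s * (m * D.e1 * m') = m * D.e1 * m'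
    have h1 : ∀ l, D.xb l * D.e1 * D.yb l * (m * D.e1 * m')
        = (D.xb l * D.E (D.yb l * m)) * (D.e1 * m') := by
      intro l
      have ha : D.e1 * (D.yb l * m) * D.e1 = D.E (D.yb l * m) * D.e1 := by
        rw [D.he1_jones _ (mul_mem (D.hyb l) hm), D.he1_jones' _ (mul_mem (D.hyb l) hm)]
      calc D.xb l * D.e1 * D.yb l * (m * D.e1 * m')
          = D.xb l * (D.e1 * (D.yb l * m) * D.e1) * m' := by noncomm_ring
        _ = D.xb l * (D.E (D.yb l * m) * D.e1) * m' := by rw [ha]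
        _ = (D.xb l * D.E (D.yb l * m)) * (D.e1 * m') := by noncomm_ring
    rw [hs, Finset.sum_mul, Finset.sum_congr rfl fun l _ => h1 l, ← Finset.sum_mul,
      D.hdual2 m hm, ← mul_assoc]
  have h1 : (1 : R) ∈ D.M1.toSubmodule := D.M1.one_mem
  rw [D.hM1_gen] at h1
  have := (Submodule.span_le.mpr hgen) h1
  have h2 : s * 1 = 1 := this
  rwa [mul_one] at h2

lemma phi_mem_M1 (u : R) (hu : u ∈ D.M) : D.phi u ∈ D.M1 :=
  sum_mem fun l _ => mul_mem (mul_mem (mul_mem (D.hMM1 (D.hxb l)) (D.hMM1 hu)) D.he1_mem)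
    (D.hMM1 (D.hyb l))

lemma phi_comm_M (u : R) (hu1 : u ∈ D.M) (hu2 : ∀ y ∈ D.N, u * y = y * u)
    (m : R) (hm : m ∈ D.M) : D.phi u * m = m * D.phi u := by
  have step1 : ∀ l, D.xb l * u * D.e1 * D.yb l * m
      = ∑ p, (D.xb l * D.E (D.yb l * m * D.xb p)) * (u * D.e1 * D.yb p) := by
    intro l
    have hd := D.hdual1 (D.yb l * m) (mul_mem (D.hyb l) hm)
    calc D.xb l * u * D.e1 * D.yb l * m
        = D.xb l * u * D.e1 * (D.yb l * m) := by noncomm_ring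
      _ = D.xb l * u * D.e1 * (∑ p, D.E (D.yb l * m * D.xb p) * D.yb p) := by rw [hd]
      _ = ∑ p, (D.xb l * D.E (D.yb l * m * D.xb p)) * (u * D.e1 * D.yb p) := by
          rw [Finset.mul_sum]
          refine Finset.sum_congr rfl fun p _ => ?_
          have hw : D.yb l * m * D.xb p ∈ D.M :=
            mul_mem (mul_mem (D.hyb l) hm) (D.hxb p)
          have hj := D.he1_jones' _ hw
          have hcu := hu2 _ (D.hE_mem _ hw)
          calc D.xb l * u * D.e1 * (D.E (D.yb l * m * D.xb p) * D.yb p)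
              = D.xb l * u * (D.e1 * D.E (D.yb l * m * D.xb p)) * D.yb p := by noncomm_ring
            _ = D.xb l * u * (D.E (D.yb l * m * D.xb p) * D.e1) * D.yb p := by rw [hj]
            _ = D.xb l * (u * D.E (D.yb l * m * D.xb p)) * D.e1 * D.yb p := by noncomm_ring
            _ = D.xb l * (D.E (D.yb l * m * D.xb p) * u) * D.e1 * D.yb p := by rw [hcu]
            _ = (D.xb l * D.E (D.yb l * m * D.xb p)) * (u * D.e1 * D.yb p) := by noncomm_ring
  have step2 : ∀ p, ∑ l, (D.xb l * D.E (D.yb l * m * D.xb p)) * (u * D.e1 * D.yb p)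
      = m * (D.xb p * u * D.e1 * D.yb p) := by
    intro p
    rw [← Finset.sum_mul]
    have hd2 := D.hdual2 (m * D.xb p) (mul_mem hm (D.hxb p))
    simp only [← mul_assoc] at hd2
    rw [hd2]
    noncomm_ring
  unfold phi
  rw [Finset.sum_mul, Finset.sum_congr rfl fun l _ => step1 l, Finset.sum_comm,
    Finset.sum_congr rfl fun p _ => step2 p, ← Finset.mul_sum]

lemma EMve1_mem (v : R) (hv1 : v ∈ D.M1) : D.lam⁻¹ • D.EM (v * D.e1) ∈ D.M :=
  D.M.smul_mem (D.hEM_mem _ (mul_mem hv1 D.he1_mem)) _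

lemma EMve1_comm (v : R) (hv1 : v ∈ D.M1) (hv2 : ∀ m ∈ D.M, v * m = m * v) :
    ∀ y ∈ D.N, (D.lam⁻¹ • D.EM (v * D.e1)) * y = y * (D.lam⁻¹ • D.EM (v * D.e1)) := by
  intro y hy
  rw [smul_mul_assoc, mul_smul_comm]
  congr 1
  have hyM : y ∈ D.M := D.hNM hy
  rw [← D.hEM_right y hyM _ (mul_mem hv1 D.he1_mem)]
  rw [show v * D.e1 * y = v * (D.e1 * y) from mul_assoc _ _ _, D.he1_N y hy,
    ← mul_assoc, hv2 y hyM, mul_assoc, D.hEM_left y hyM _ (mul_mem hv1 D.he1_mem)]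

lemma phi_section (v : R) (hv1 : v ∈ D.M1) (hv2 : ∀ m ∈ D.M, v * m = m * v) :
    D.phi (D.lam⁻¹ • D.EM (v * D.e1)) = v := by
  have hEe : D.EM (v * D.e1) * D.e1 = D.lam • (v * D.e1) := by
    have h := D.hPP1 v hv1
    conv_rhs => rw [h]
    rw [smul_smul, mul_inv_cancel₀ D.lam_ne, one_smul]
  have hterm : ∀ l, D.xb l * (D.lam⁻¹ • D.EM (v * D.e1)) * D.e1 * D.yb l
      = v * (D.xb l * D.e1 * D.yb l) := by
    intro l
    calc D.xb l * (D.lam⁻¹ • D.EM (v * D.e1)) * D.e1 * D.yb l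
        = D.lam⁻¹ • (D.xb l * (D.EM (v * D.e1) * D.e1) * D.yb l) := by
          simp only [mul_smul_comm, smul_mul_assoc, mul_assoc]
      _ = D.lam⁻¹ • (D.xb l * (D.lam • (v * D.e1)) * D.yb l) := by rw [hEe]
      _ = (D.lam⁻¹ * D.lam) • (D.xb l * (v * D.e1) * D.yb l) := by
          simp only [mul_smul_comm, smul_mul_assoc, smul_smul]
      _ = D.xb l * v * D.e1 * D.yb l := by
          rw [inv_mul_cancel₀ D.lam_ne, one_smul]; noncomm_ring
      _ = v * (D.xb l * D.e1 * D.yb l) := by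
          rw [← hv2 (D.xb l) (D.hxb l)]; noncomm_ring
  unfold phi
  rw [Finset.sum_congr rfl fun l _ => hterm l, ← Finset.mul_sum, D.sum_x_e1_y, mul_one]

lemma TL (u u' : R) (hu : u ∈ D.M) (hu'1 : u' ∈ D.M)
    (hu'2 : ∀ y ∈ D.N, u' * y = y * u') :
    D.T (D.phi u * D.phi u') = D.T (u * u') := by
  have expand : D.phi u * D.phi u'
      = ∑ l, ∑ m, (D.xb l * u * D.e1 * D.yb l) * (D.xb m * u' * D.e1 * D.yb m) := by
    rw [phi, phi, Finset.sum_mul]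
    exact Finset.sum_congr rfl fun l _ => Finset.mul_sum _ _ _
  rw [expand]
  simp only [map_sum]
  have step : ∀ l m, D.T ((D.xb l * u * D.e1 * D.yb l) * (D.xb m * u' * D.e1 * D.yb m))
      = D.lam * D.T (D.xb l * u * (D.E (u' * D.yb l * D.xb m) * D.yb m)) := by
    intro l m
    have hw : D.yb l * D.xb m * u' ∈ D.M := mul_mem (mul_mem (D.hyb l) (D.hxb m)) hu'1
    have h1 : D.e1 * (D.yb l * D.xb m * u') * D.e1 = D.E (D.yb l * D.xb m * u') * D.e1 := by
      rw [D.he1_jones _ hw, D.he1_jones' _ hw]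
    have h2 : D.E (D.yb l * D.xb m * u') = D.E (u' * D.yb l * D.xb m) := by
      rw [mul_assoc u']
      exact (D.hsymm u' hu'1 hu'2 _ (mul_mem (D.hyb l) (D.hxb m))).symm
    have e1eq : (D.xb l * u * D.e1 * D.yb l) * (D.xb m * u' * D.e1 * D.yb m)
        = ((D.xb l * u * D.E (D.yb l * D.xb m * u')) * D.e1) * D.yb m := by
      calc (D.xb l * u * D.e1 * D.yb l) * (D.xb m * u' * D.e1 * D.yb m)
          = D.xb l * u * (D.e1 * (D.yb l * D.xb m * u') * D.e1) * D.yb m := by noncomm_ring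
        _ = D.xb l * u * (D.E (D.yb l * D.xb m * u') * D.e1) * D.yb m := by rw [h1]
        _ = ((D.xb l * u * D.E (D.yb l * D.xb m * u')) * D.e1) * D.yb m := by noncomm_ring
    have hzM : D.yb m * (D.xb l * u * D.E (D.yb l * D.xb m * u')) ∈ D.M :=
      mul_mem (D.hyb m) (mul_mem (mul_mem (D.hxb l) hu) (D.hNM (D.hE_mem _ hw)))
    calc D.T ((D.xb l * u * D.e1 * D.yb l) * (D.xb m * u' * D.e1 * D.yb m))
        = D.T (((D.xb l * u * D.E (D.yb l * D.xb m * u')) * D.e1) * D.yb m) := by rw [e1eq]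
      _ = D.T (D.yb m * ((D.xb l * u * D.E (D.yb l * D.xb m * u')) * D.e1)) := by
          rw [D.hT_tr]
      _ = D.T ((D.yb m * (D.xb l * u * D.E (D.yb l * D.xb m * u'))) * D.e1) := by
          rw [← mul_assoc]
      _ = D.lam * D.T (D.yb m * (D.xb l * u * D.E (D.yb l * D.xb m * u'))) := by
          rw [D.T_mul_e1 _ hzM]
      _ = D.lam * D.T ((D.xb l * u * D.E (D.yb l * D.xb m * u')) * D.yb m) := by
          rw [D.hT_tr]
      _ = D.lam * D.T (D.xb l * u * (D.E (u' * D.yb l * D.xb m) * D.yb m)) := by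
          rw [h2, mul_assoc]
  rw [Finset.sum_congr rfl fun l _ => Finset.sum_congr rfl fun m _ => step l m]
  have step2 : ∀ l, ∑ m, D.lam * D.T (D.xb l * u * (D.E (u' * D.yb l * D.xb m) * D.yb m))
      = D.lam * D.T (u * u' * (D.yb l * D.xb l)) := by
    intro l
    rw [← Finset.mul_sum, ← map_sum, ← Finset.mul_sum, D.hdual1 _ (mul_mem hu'1 (D.hyb l))]
    congr 1
    rw [mul_assoc, D.hT_tr]
    congr 1
    noncomm_ring
  rw [Finset.sum_congr rfl fun l _ => step2 l, ← Finset.mul_sum, ← map_sum, ← Finset.mul_sum,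
    D.hindex', mul_smul_comm, mul_one, map_smul, smul_eq_mul, ← mul_assoc,
    mul_inv_cancel₀ D.lam_ne, one_mul]

lemma phi_sum_smul {n : ℕ} (s : Fin n → k) (f : Fin n → R) :
    D.phi (∑ i, s i • f i) = ∑ i, s i • D.phi (f i) := by
  unfold phi
  have key : ∀ l, D.xb l * (∑ i, s i • f i) * D.e1 * D.yb l
      = ∑ i, s i • (D.xb l * f i * D.e1 * D.yb l) := by
    intro l
    rw [Finset.mul_sum, Finset.sum_mul, Finset.sum_mul]
    exact Finset.sum_congr rfl fun i _ => by
      simp only [mul_smul_comm, smul_mul_assoc]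
  rw [Finset.sum_congr rfl fun l _ => key l, Finset.sum_comm]
  exact Finset.sum_congr rfl fun i _ => Finset.smul_sum.symm

lemma mem_U_iff (u : R) : u ∈ D.U ↔ u ∈ D.M ∧ ∀ y ∈ D.N, u * y = y * u := by
  rw [U, Algebra.mem_inf, Subalgebra.mem_centralizer_iff]
  exact and_congr_right fun _ =>
    ⟨fun h y hy => (h y hy).symm, fun h y hy => (h y hy).symm⟩

lemma D1 {nU : ℕ} {ab bb : Fin nU → R}
    (hab : ∀ i, ab i ∈ D.U)
    (habb : ∀ u ∈ D.U, ∑ i, D.T (u * ab i) • bb i = u)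
    (v : R) (hv1 : v ∈ D.M1) (hv2 : ∀ m ∈ D.M, v * m = m * v) :
    ∑ i, D.T (v * D.phi (ab i)) • D.phi (bb i) = v := by
  have hu1 : D.lam⁻¹ • D.EM (v * D.e1) ∈ D.M := D.EMve1_mem v hv1
  have hu2 := D.EMve1_comm v hv1 hv2
  set u := D.lam⁻¹ • D.EM (v * D.e1) with hu
  have hvu : D.phi u = v := D.phi_section v hv1 hv2
  have huU : u ∈ D.U := (D.mem_U_iff u).mpr ⟨hu1, hu2⟩
  calc ∑ i, D.T (v * D.phi (ab i)) • D.phi (bb i)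
      = ∑ i, D.T (u * ab i) • D.phi (bb i) := by
        refine Finset.sum_congr rfl fun i _ => ?_
        rw [← hvu, D.TL u (ab i) hu1 ((D.mem_U_iff _).mp (hab i)).1
          ((D.mem_U_iff _).mp (hab i)).2]
    _ = D.phi (∑ i, D.T (u * ab i) • bb i) := (D.phi_sum_smul _ _).symm
    _ = v := by rw [habb u huU, hvu]

lemma Ddual2 {nU : ℕ} {ab bb : Fin nU → R}
    (hbb : ∀ i, bb i ∈ D.U)
    (habb' : ∀ u ∈ D.U, ∑ i, D.T (bb i * u) • ab i = u)
    (v : R) (hv1 : v ∈ D.M1) (hv2 : ∀ m ∈ D.M, v * m = m * v) :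
    ∑ i, D.T (D.phi (bb i) * v) • D.phi (ab i) = v := by
  have hu1 : D.lam⁻¹ • D.EM (v * D.e1) ∈ D.M := D.EMve1_mem v hv1
  have hu2 := D.EMve1_comm v hv1 hv2
  set u := D.lam⁻¹ • D.EM (v * D.e1) with hu
  have hvu : D.phi u = v := D.phi_section v hv1 hv2
  have huU : u ∈ D.U := (D.mem_U_iff u).mpr ⟨hu1, hu2⟩
  calc ∑ i, D.T (D.phi (bb i) * v) • D.phi (ab i)
      = ∑ i, D.T (bb i * u) • D.phi (ab i) := by
        refine Finset.sum_congr rfl fun i _ => ?_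
        rw [← hvu, D.TL (bb i) u ((D.mem_U_iff _).mp (hbb i)).1 hu1 hu2]
    _ = D.phi (∑ i, D.T (bb i * u) • ab i) := (D.phi_sum_smul _ _).symm
    _ = v := by rw [habb' u huU, hvu]

lemma CAS {nU : ℕ} {ab bb : Fin nU → R}
    (hab : ∀ i, ab i ∈ D.U) (hbb : ∀ i, bb i ∈ D.U)
    (habb : ∀ u ∈ D.U, ∑ i, D.T (u * ab i) • bb i = u)
    (habb' : ∀ u ∈ D.U, ∑ i, D.T (bb i * u) • ab i = u)
    (x v : R) (hv1 : v ∈ D.M1) (hv2 : ∀ m ∈ D.M, v * m = m * v) :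
    ∑ i, D.T (x * (v * D.phi (ab i))) • D.phi (bb i)
      = ∑ i, D.T (x * D.phi (ab i)) • (D.phi (bb i) * v) := by
  have habM : ∀ i, ab i ∈ D.M := fun i => ((D.mem_U_iff _).mp (hab i)).1
  have habN : ∀ i, ∀ y ∈ D.N, ab i * y = y * ab i := fun i => ((D.mem_U_iff _).mp (hab i)).2
  have hbbM : ∀ i, bb i ∈ D.M := fun i => ((D.mem_U_iff _).mp (hbb i)).1
  have hbbN : ∀ i, ∀ y ∈ D.N, bb i * y = y * bb i := fun i => ((D.mem_U_iff _).mp (hbb i)).2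
  have hvc1 : ∀ i, v * D.phi (ab i) ∈ D.M1 := fun i => mul_mem hv1 (D.phi_mem_M1 _ (habM i))
  have hvc2 : ∀ i, ∀ m ∈ D.M, v * D.phi (ab i) * m = m * (v * D.phi (ab i)) := by
    intro i m hm
    rw [mul_assoc, D.phi_comm_M _ (habM i) (habN i) m hm, ← mul_assoc, hv2 m hm, mul_assoc]
  have hdc1 : ∀ p, D.phi (bb p) * v ∈ D.M1 := fun p => mul_mem (D.phi_mem_M1 _ (hbbM p)) hv1
  have hdc2 : ∀ p, ∀ m ∈ D.M, D.phi (bb p) * v * m = m * (D.phi (bb p) * v) := by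
    intro p m hm
    rw [mul_assoc, hv2 m hm, ← mul_assoc, D.phi_comm_M _ (hbbM p) (hbbN p) m hm, mul_assoc]
  have hexp : ∀ i, v * D.phi (ab i)
      = ∑ p, D.T (D.phi (bb p) * (v * D.phi (ab i))) • D.phi (ab p) :=
    fun i => (D.Ddual2 hbb habb' (v * D.phi (ab i)) (hvc1 i) (hvc2 i)).symm
  calc ∑ i, D.T (x * (v * D.phi (ab i))) • D.phi (bb i)
      = ∑ i, ∑ p, (D.T (D.phi (bb p) * (v * D.phi (ab i))) * D.T (x * D.phi (ab p)))
          • D.phi (bb i) := by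
        refine Finset.sum_congr rfl fun i _ => ?_
        conv_lhs => rw [hexp i]
        rw [Finset.mul_sum, map_sum, Finset.sum_smul]
        refine Finset.sum_congr rfl fun p _ => ?_
        rw [mul_smul_comm, map_smul, smul_eq_mul]
    _ = ∑ p, D.T (x * D.phi (ab p))
          • (∑ i, D.T ((D.phi (bb p) * v) * D.phi (ab i)) • D.phi (bb i)) := by
        rw [Finset.sum_comm]
        refine Finset.sum_congr rfl fun p _ => ?_
        rw [Finset.smul_sum]
        refine Finset.sum_congr rfl fun i _ => ?_
        rw [smul_smul,
          mul_comm (D.T (D.phi (bb p) * (v * D.phi (ab i)))) (D.T (x * D.phi (ab p))),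
          ← mul_assoc (D.phi (bb p)) v (D.phi (ab i))]
    _ = ∑ p, D.T (x * D.phi (ab p)) • (D.phi (bb p) * v) := by
        refine Finset.sum_congr rfl fun p _ => ?_
        rw [D.D1 hab habb (D.phi (bb p) * v) (hdc1 p) (hdc2 p)]

lemma main_aux2 {nU : ℕ} {ab bb : Fin nU → R}
    (hab : ∀ i, ab i ∈ D.U) (hbb : ∀ i, bb i ∈ D.U)
    (habb : ∀ u ∈ D.U, ∑ i, D.T (u * ab i) • bb i = u)
    (habb' : ∀ u ∈ D.U, ∑ i, D.T (bb i * u) • ab i = u)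
    (c : R) :
    D.EM1 (∑ j, ∑ i, D.T (c * D.ub j * D.phi (ab i)) • (D.phi (bb i) * D.vb j))
      = ∑ i, D.T (c * D.phi (ab i)) • D.phi (bb i) := by
  have hbbM : ∀ i, bb i ∈ D.M := fun i => ((D.mem_U_iff _).mp (hbb i)).1
  have h1 : ∀ i j, D.EM1 (D.phi (bb i) * D.vb j) = D.phi (bb i) * D.EM1 (D.vb j) :=
    fun i j => D.hEM1_left _ (D.phi_mem_M1 _ (hbbM i)) _
  have hv1 : ∀ j, D.EM1 (D.vb j) ∈ D.M1 := fun j => D.hEM1_mem _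
  have hv2 : ∀ j, ∀ m ∈ D.M, D.EM1 (D.vb j) * m = m * D.EM1 (D.vb j) :=
    fun j => D.EM1_comm_M _ (D.hvb j)
  have hone : ∑ j, D.ub j * D.EM1 (D.vb j) = 1 := by
    have := D.hdualB2 1
    simpa using this
  simp only [map_sum, map_smul, h1]
  have stepj : ∀ j, ∑ i, D.T (c * D.ub j * D.phi (ab i)) • (D.phi (bb i) * D.EM1 (D.vb j))
      = ∑ i, D.T ((c * (D.ub j * D.EM1 (D.vb j))) * D.phi (ab i)) • D.phi (bb i) := by
    intro j
    rw [← D.CAS hab hbb habb habb' (c * D.ub j) (D.EM1 (D.vb j)) (hv1 j) (hv2 j)]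
    refine Finset.sum_congr rfl fun i _ => ?_
    rw [show (c * D.ub j) * (D.EM1 (D.vb j) * D.phi (ab i))
        = (c * (D.ub j * D.EM1 (D.vb j))) * D.phi (ab i) by noncomm_ring]
  rw [Finset.sum_congr rfl fun j _ => stepj j, Finset.sum_comm]
  refine Finset.sum_congr rfl fun i _ => ?_
  rw [← Finset.sum_smul]
  congr 1
  rw [← map_sum, ← Finset.sum_mul, ← Finset.mul_sum, hone, mul_one]

lemma main_aux1 {nU : ℕ} {ab bb : Fin nU → R}
    (hab : ∀ i, ab i ∈ D.U) (hbb : ∀ i, bb i ∈ D.U)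
    (habb : ∀ u ∈ D.U, ∑ i, D.T (u * ab i) • bb i = u)
    (habb' : ∀ u ∈ D.U, ∑ i, D.T (bb i * u) • ab i = u)
    (c : R) :
    ∑ j, ∑ i, D.T (D.EM1 c * D.ub j * D.phi (ab i)) • (D.phi (bb i) * D.vb j)
      = ∑ i, D.T (c * D.phi (ab i)) • D.phi (bb i) := by
  have habM : ∀ i, ab i ∈ D.M := fun i => ((D.mem_U_iff _).mp (hab i)).1
  have hu1 : ∀ j, D.EM1 (D.ub j) ∈ D.M1 := fun j => D.hEM1_mem _
  have hu2 : ∀ j, ∀ m ∈ D.M, D.EM1 (D.ub j) * m = m * D.EM1 (D.ub j) :=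
    fun j => D.EM1_comm_M _ (D.hub j)
  have hone : ∑ j, D.EM1 (D.ub j) * D.vb j = 1 := by
    have := D.hdualB1 1
    simpa using this
  have hts : ∀ i j, D.T (D.EM1 c * D.ub j * D.phi (ab i))
      = D.T (c * (D.EM1 (D.ub j) * D.phi (ab i))) := by
    intro i j
    rw [mul_assoc, D.trace_EM1_swap c (D.ub j * D.phi (ab i)),
      D.hEM1_right _ (D.phi_mem_M1 _ (habM i)) (D.ub j)]
  simp only [hts]
  have stepj : ∀ j, ∑ i, D.T (c * (D.EM1 (D.ub j) * D.phi (ab i))) • (D.phi (bb i) * D.vb j)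
      = ∑ i, D.T (c * D.phi (ab i)) • (D.phi (bb i) * (D.EM1 (D.ub j) * D.vb j)) := by
    intro j
    have hcas := D.CAS hab hbb habb habb' c (D.EM1 (D.ub j)) (hu1 j) (hu2 j)
    calc ∑ i, D.T (c * (D.EM1 (D.ub j) * D.phi (ab i))) • (D.phi (bb i) * D.vb j)
        = (∑ i, D.T (c * (D.EM1 (D.ub j) * D.phi (ab i))) • D.phi (bb i)) * D.vb j := by
          rw [Finset.sum_mul]
          exact Finset.sum_congr rfl fun i _ => (smul_mul_assoc _ _ _).symm
      _ = (∑ i, D.T (c * D.phi (ab i)) • (D.phi (bb i) * D.EM1 (D.ub j))) * D.vb j := by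
          rw [hcas]
      _ = ∑ i, D.T (c * D.phi (ab i)) • (D.phi (bb i) * (D.EM1 (D.ub j) * D.vb j)) := by
          rw [Finset.sum_mul]
          refine Finset.sum_congr rfl fun i _ => ?_
          rw [smul_mul_assoc, mul_assoc]
  rw [Finset.sum_congr rfl fun j _ => stepj j, Finset.sum_comm]
  refine Finset.sum_congr rfl fun i _ => ?_
  rw [← Finset.smul_sum, ← Finset.mul_sum, hone, mul_one]

end D2

/-- commuting square condition: `E_A ∘ E_B = E_B ∘ E_A` on `C`, and
both composites are equal to `c ↦ ∑ T(c c_i) d_i`.  Here `a_i, b_i` are dual bases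
in `U` for the trace `T`, `c_i = φ(a_i)`, `d_i = φ(b_i)` with
`φ(u) = ∑ x_l u e₁ y_l`, `E_A = E_{M₁}|_C` and `E_B(c) = ∑ T(c u_j c_i) d_i v_j`. -/
theorem stmt5 {k : Type*} [Field k] {R : Type*} [Ring R] [Algebra k R] (D : D2 k R)
    (nU : ℕ) (ab bb : Fin nU → R)
    (hab : ∀ i, ab i ∈ D.U) (hbb : ∀ i, bb i ∈ D.U)
    (habb : ∀ u ∈ D.U, ∑ i, D.T (u * ab i) • bb i = u)
    (habb' : ∀ u ∈ D.U, ∑ i, D.T (bb i * u) • ab i = u) :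
    let φf : R → R := fun u => ∑ l, D.xb l * u * D.e1 * D.yb l
    let EB : R → R := fun c =>
      ∑ j, ∑ i, D.T (c * D.ub j * φf (ab i)) • (φf (bb i) * D.vb j)
    ∀ c ∈ D.C,
      D.EM1 (EB c) = EB (D.EM1 c) ∧
      D.EM1 (EB c) = ∑ i, D.T (c * φf (ab i)) • φf (bb i) := by
  intro φf EB c hc
  constructor
  · show D.EM1 (∑ j, ∑ i, D.T (c * D.ub j * D.phi (ab i)) • (D.phi (bb i) * D.vb j))
        = ∑ j, ∑ i, D.T (D.EM1 c * D.ub j * D.phi (ab i)) • (D.phi (bb i) * D.vb j)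
    rw [D.main_aux2 hab hbb habb habb' c, D.main_aux1 hab hbb habb habb' c]
  · show D.EM1 (∑ j, ∑ i, D.T (c * D.ub j * D.phi (ab i)) • (D.phi (bb i) * D.vb j))
        = ∑ i, D.T (c * D.phi (ab i)) • D.phi (bb i)
    exact D.main_aux2 hab hbb habb habb' c
end
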